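/- arXiv:2111.10575 — 4 statements merged into one kernel-verified Lean document; each statement's English description precedes it below -/
import Mathlib

section
/- Let n ≥ 2 and let u be a convex C² function on B₁(0)∖{0} ⊂ ℝⁿ satisfying det D²u(x) = g(Du(x)) there, where g satisfies 0 < λ ≤ g ≤ Λ < ∞. Assume there are constants C₀, c₀ > 0 such that |x|·‖D²u(x)‖ ≤ C₀ and |x|·ξᵀ D²u(x) ξ ≥ c₀ for every x ∈ B₁(0)∖{0} and every unit vector ξ orthogonal to x. Let λ₁(x) ≥ λ₂(x) ≥ … ≥ λ_n(x) denote the eigenvalues of D²u(x). Then there exist constants c, C > 0 (depending only on n, λ, Λ, C₀, c₀) such that for all x ∈ B₁(0)∖{0}: c ≤ |x|·λ_i(x) ≤ C for every 1 ≤ i ≤ n−1, and c ≤ λ_n(x)/|x|^{n−1} ≤ C. -/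
open MeasureTheory
open scoped ENNReal

noncomputable section

/-- Euclidean n-space. -/
abbrev Eu (n : ℕ) := EuclideanSpace ℝ (Fin n)

/-- Partial derivative ∂ψ/∂xᵢ. -/
def pd {n : ℕ} (ψ : Eu n → ℝ) (i : Fin n) (x : Eu n) : ℝ :=
  fderiv ℝ ψ x (EuclideanSpace.single i 1)

/-- Second partial derivative ∂²ψ/∂xᵢ∂xⱼ. -/
def pd2 {n : ℕ} (ψ : Eu n → ℝ) (i j : Fin n) (x : Eu n) : ℝ :=
  pd (pd ψ j) i x

/-!
Every eigenvalue is at most `‖D²u(x)‖ ≤ C₀ / |x|`. The plane spanned by the eigenvectors of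
`λₙ₋₁` and `λₙ` contains a unit vector `ξ ⟂ x`, and `ξᵀ D²u(x) ξ ≤ λₙ₋₁`; so the tangential lower
bound gives `c₀ ≤ |x| λₙ₋₁ ≤ |x| λᵢ` for all `i < n`. Finally `λ₁ ⋯ λₙ = det D²u(x) = g(Du(x))`
lies in `[λ, Λ]` while `|x|ⁿ⁻¹ λ₁ ⋯ λₙ₋₁` lies in `[c₀ⁿ⁻¹, C₀ⁿ⁻¹]`, which pins down
`λₙ / |x|ⁿ⁻¹`.
-/

open scoped InnerProductSpace

section Bilinear

variable {ι E : Type*} [NormedAddCommGroup E] [InnerProductSpace ℝ E]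

theorem LinearMap.det_toMatrix₂_orthonormalBasis_eq [Fintype ι] [DecidableEq ι] (B : E →ₗ[ℝ] E →ₗ[ℝ] ℝ)
    (a b : OrthonormalBasis ι ℝ E) :
    (LinearMap.toMatrix₂ a.toBasis a.toBasis B).det =
      (LinearMap.toMatrix₂ b.toBasis b.toBasis B).det := by
  rw [← LinearMap.toMatrix₂_mul_basis_toMatrix a.toBasis a.toBasis b.toBasis b.toBasis,
    Matrix.det_mul, Matrix.det_mul, Matrix.det_transpose, ← Module.Basis.det_apply]
  rcases a.det_to_matrix_orthonormalBasis_real b with h | h <;> simp [h]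

theorem LinearMap.det_toMatrix₂_eq_prod_of_orthonormal_eigenvectors [Fintype ι] [DecidableEq ι]
    (B : E →ₗ[ℝ] E →ₗ[ℝ] ℝ)
    (b : OrthonormalBasis ι ℝ E) {μ : ι → ℝ} {v : ι → E} (hv : Orthonormal ℝ v)
    (hB : ∀ i w, B (v i) w = μ i * ⟪v i, w⟫_ℝ) :
    (LinearMap.toMatrix₂ b.toBasis b.toBasis B).det = ∏ i, μ i := by
  have : FiniteDimensional ℝ E := b.toBasis.finiteDimensional_of_finite
  have hspan : ⊤ ≤ Submodule.span ℝ (Set.range v) :=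
    (hv.linearIndependent.span_eq_top_of_card_eq_finrank'
      (Module.finrank_eq_card_basis b.toBasis).symm).ge
  rw [B.det_toMatrix₂_orthonormalBasis_eq b (OrthonormalBasis.mk hv hspan), ← Matrix.det_diagonal]
  congr 1
  ext i j
  simp [LinearMap.toMatrix₂_apply, hB, orthonormal_iff_ite.mp hv, Matrix.diagonal_apply]

theorem LinearMap.apply_self_le_of_mem_span_pair (B : E →ₗ[ℝ] E →ₗ[ℝ] ℝ) {μ : ι → ℝ}
    {v : ι → E} (hv : Orthonormal ℝ v) (hB : ∀ k w, B (v k) w = μ k * ⟪v k, w⟫_ℝ) {i j : ι}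
    (hij : i ≠ j) (hμ : μ j ≤ μ i) (s t : ℝ) :
    B (s • v i + t • v j) (s • v i + t • v j) ≤ μ i * ‖s • v i + t • v j‖ ^ 2 := by
  have hquad : B (s • v i + t • v j) (s • v i + t • v j) = s ^ 2 * μ i + t ^ 2 * μ j := by
    simp only [map_add, map_smul, LinearMap.add_apply, LinearMap.smul_apply, smul_eq_mul, hB,
      hv.2 hij, hv.2 hij.symm, real_inner_self_eq_norm_sq, hv.1 i, hv.1 j]
    ring
  have hnorm : ‖s • v i + t • v j‖ ^ 2 = s ^ 2 + t ^ 2 := by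
    rw [norm_add_sq_real, norm_smul, norm_smul, real_inner_smul_left, real_inner_smul_right,
      hv.1 i, hv.1 j, hv.2 hij]
    simp
  rw [hquad, hnorm]
  nlinarith [sq_nonneg t]

theorem LinearMap.exists_norm_eq_one_inner_eq_zero_apply_self_le (B : E →ₗ[ℝ] E →ₗ[ℝ] ℝ)
    {μ : ι → ℝ} {v : ι → E} (hv : Orthonormal ℝ v) (hB : ∀ k w, B (v k) w = μ k * ⟪v k, w⟫_ℝ)
    {i j : ι} (hij : i ≠ j) (hμ : μ j ≤ μ i) (x : E) :
    ∃ ξ : E, ‖ξ‖ = 1 ∧ ⟪ξ, x⟫_ℝ = 0 ∧ B ξ ξ ≤ μ i := by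
  obtain ⟨s, t, hst, hsx⟩ : ∃ s t : ℝ, s • v i + t • v j ≠ 0 ∧ ⟪s • v i + t • v j, x⟫_ℝ = 0 := by
    by_cases hα : ⟪v i, x⟫_ℝ = 0
    · exact ⟨1, 0, by simpa using hv.ne_zero i, by simpa using hα⟩
    · refine ⟨⟪v j, x⟫_ℝ, -⟪v i, x⟫_ℝ, fun h => ?_, ?_⟩
      · have := congrArg (fun w => ⟪v j, w⟫_ℝ) h
        simp only [inner_add_right, real_inner_smul_right, hv.2 hij.symm, real_inner_self_eq_norm_sq,
          hv.1 j, inner_zero_right] at this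
        exact hα (by linarith)
      · simp only [inner_add_left, real_inner_smul_left]
        ring
  set w := s • v i + t • v j
  have hw : 0 < ‖w‖ := norm_pos_iff.mpr hst
  refine ⟨‖w‖⁻¹ • w, norm_smul_inv_norm hst, by rw [real_inner_smul_left, hsx, mul_zero], ?_⟩
  have hle := B.apply_self_le_of_mem_span_pair hv hB hij hμ s t
  simp only [map_smul, LinearMap.smul_apply, smul_eq_mul]
  calc ‖w‖⁻¹ * (‖w‖⁻¹ * B w w) = B w w / ‖w‖ ^ 2 := by field_simp
    _ ≤ μ i := by rwa [div_le_iff₀ (by positivity)]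

end Bilinear

theorem div_pow_card_sub_one_mem_Icc_of_prod_mem_Icc {ι : Type*} [Fintype ι] [DecidableEq ι]
    {μ : ι → ℝ} {k : ι} {r c C a A : ℝ} (hr : 0 < r) (hc : 0 < c) (ha : 0 < a)
    (hμ : ∀ i ≠ k, r * μ i ∈ Set.Icc c C) (hprod : ∏ i, μ i ∈ Set.Icc a A) :
    μ k / r ^ (Fintype.card ι - 1) ∈
      Set.Icc (a / C ^ (Fintype.card ι - 1)) (A / c ^ (Fintype.card ι - 1)) := by
  set m := Fintype.card ι - 1
  have hcard : (Finset.univ.erase k).card = m := by simp [m, Finset.card_erase_of_mem]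
  set P := ∏ i ∈ Finset.univ.erase k, r * μ i
  have hcP : c ^ m ≤ P := by
    rw [← hcard, ← Finset.prod_const]
    exact Finset.prod_le_prod (fun _ _ => hc.le) fun i hi => (hμ i (Finset.ne_of_mem_erase hi)).1
  have hPC : P ≤ C ^ m := by
    rw [← hcard, ← Finset.prod_const]
    exact Finset.prod_le_prod (fun i hi => hc.le.trans (hμ i (Finset.ne_of_mem_erase hi)).1)
      fun i hi => (hμ i (Finset.ne_of_mem_erase hi)).2
  have hrest : 0 < ∏ i ∈ Finset.univ.erase k, μ i := Finset.prod_pos fun i hi =>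
    pos_of_mul_pos_right (hc.trans_le (hμ i (Finset.ne_of_mem_erase hi)).1) hr.le
  have hquot : μ k / r ^ m = (∏ i, μ i) / P := by
    simp only [P]
    rw [← Finset.mul_prod_erase _ _ (Finset.mem_univ k), Finset.prod_mul_distrib,
      Finset.prod_const, hcard, mul_div_mul_right _ _ hrest.ne']
  have hPpos : 0 < P := (pow_pos hc m).trans_le hcP
  rw [hquot]
  exact ⟨div_le_div₀ (ha.le.trans hprod.1) hprod.1 hPpos hPC,
    div_le_div₀ (ha.le.trans (hprod.1.trans hprod.2)) hprod.2 (pow_pos hc m) hcP⟩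

theorem pd2_eq_fderiv_fderiv {n : ℕ} {u : Eu n → ℝ} {x : Eu n}
    (h : DifferentiableAt ℝ (fderiv ℝ u) x) (i j : Fin n) :
    pd2 u i j x =
      fderiv ℝ (fderiv ℝ u) x (EuclideanSpace.single i 1) (EuclideanSpace.single j 1) := by
  have hpd : pd u j = fun y => fderiv ℝ u y (EuclideanSpace.single j 1) := rfl
  simp [pd2, pd, hpd, fderiv_clm_apply h (differentiableAt_const _)]

theorem ContinuousLinearMap.apply_self_le_opNorm {E : Type*} [NormedAddCommGroup E]
    [NormedSpace ℝ E] (B : E →L[ℝ] E →L[ℝ] ℝ) {v : E} (hv : ‖v‖ = 1) : B v v ≤ ‖B‖ := by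
  simpa [hv] using (le_abs_self _).trans (B.le_opNorm₂ v v)

theorem det_pd2_eq_prod {n : ℕ} {u : Eu n → ℝ} {x : Eu n}
    (h : DifferentiableAt ℝ (fderiv ℝ u) x) {μ : Fin n → ℝ} {v : Fin n → Eu n}
    (hv : Orthonormal ℝ v)
    (hμ : ∀ i w, fderiv ℝ (fderiv ℝ u) x (v i) w = μ i * ⟪v i, w⟫_ℝ) :
    (Matrix.of fun i j => pd2 u i j x).det = ∏ i, μ i := by
  set B := fderiv ℝ (fderiv ℝ u) x
  have hmat : (Matrix.of fun i j => pd2 u i j x) = LinearMap.toMatrix₂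
      (EuclideanSpace.basisFun (Fin n) ℝ).toBasis (EuclideanSpace.basisFun (Fin n) ℝ).toBasis
      B.toLinearMap₁₂ := by
    ext i j
    simp [LinearMap.toMatrix₂_apply, pd2_eq_fderiv_fderiv h, B]
  rw [hmat]
  exact B.toLinearMap₁₂.det_toMatrix₂_eq_prod_of_orthonormal_eigenvectors _ hv hμ

theorem stmt5_general (n : ℕ) (hn : 2 ≤ n) (ln : Fin n) (hln : (ln : ℕ) = n - 1)
    (lam Lam : ℝ) (hlam : 0 < lam)
    (C₀ c₀ : ℝ) (hC₀ : 0 < C₀) (hc₀ : 0 < c₀) :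
    ∃ c C : ℝ, 0 < c ∧ 0 < C ∧
      ∀ (u g : Eu n → ℝ),
        -- u is a convex C² function on B₁ ∖ {0}
        ConvexOn ℝ (Metric.ball (0 : Eu n) 1) u →
        ContDiffOn ℝ 2 u (Metric.ball (0 : Eu n) 1 \ {0}) →
        -- det D²u = g(Du), with λ ≤ g ≤ Λ
        (∀ p, lam ≤ g p ∧ g p ≤ Lam) →
        (∀ x ∈ Metric.ball (0 : Eu n) 1 \ {0},
          (Matrix.of fun i j => pd2 u i j x).det = g (gradient u x)) →
        -- |x|·‖D²u(x)‖ ≤ C₀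
        (∀ x ∈ Metric.ball (0 : Eu n) 1 \ {0},
          ‖x‖ * ‖fderiv ℝ (fderiv ℝ u) x‖ ≤ C₀) →
        -- |x|·ξᵀD²u(x)ξ ≥ c₀ for unit ξ ⟂ x
        (∀ x ∈ Metric.ball (0 : Eu n) 1 \ {0}, ∀ ξ : Eu n, ‖ξ‖ = 1 →
          (inner ℝ ξ x : ℝ) = 0 → c₀ ≤ ‖x‖ * fderiv ℝ (fderiv ℝ u) x ξ ξ) →
        -- eigenvalue bounds: for any decreasing enumeration μ of the eigenvalues of
        -- D²u(x) (with orthonormal eigenbasis v) …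
        ∀ x ∈ Metric.ball (0 : Eu n) 1 \ {0},
        ∀ (μ : Fin n → ℝ) (v : Fin n → Eu n),
          Orthonormal ℝ v →
          (∀ i : Fin n, ∀ w : Eu n,
            fderiv ℝ (fderiv ℝ u) x (v i) w = μ i * (inner ℝ (v i) w : ℝ)) →
          (∀ i j : Fin n, i ≤ j → μ j ≤ μ i) →
          -- … c ≤ |x|·λᵢ ≤ C for i = 1,…,n-1 and c ≤ λₙ/|x|^{n-1} ≤ C
          (∀ i : Fin n, i ≠ ln → c ≤ ‖x‖ * μ i ∧ ‖x‖ * μ i ≤ C) ∧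
          c ≤ μ ln / ‖x‖ ^ (n - 1) ∧ μ ln / ‖x‖ ^ (n - 1) ≤ C := by
  refine ⟨min c₀ (lam / C₀ ^ (n - 1)), max C₀ (Lam / c₀ ^ (n - 1)),
    lt_min hc₀ (by positivity), lt_max_of_lt_left hC₀, ?_⟩
  intro u g _ hu hg hdet hC hc x hx μ v hv hμ hmono
  set B := fderiv ℝ (fderiv ℝ u) x
  have hx0 : 0 < ‖x‖ := norm_pos_iff.mpr hx.2
  have hdiff : DifferentiableAt ℝ (fderiv ℝ u) x :=
    (((hu x hx).contDiffAt ((Metric.isOpen_ball.sdiff isClosed_singleton).mem_nhds hx)).fderiv_right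
      (m := 1) (by norm_num)).differentiableAt (by norm_num)
  have hupper (i : Fin n) : ‖x‖ * μ i ≤ C₀ := by
    have hμi : μ i = B (v i) (v i) := by simp [hμ, hv.1 i]
    exact (mul_le_mul_of_nonneg_left (hμi ▸ B.apply_self_le_opNorm (hv.1 i)) hx0.le).trans (hC x hx)
  set a : Fin n := ⟨n - 2, by omega⟩
  have hlower (i : Fin n) (hi : i ≠ ln) : c₀ ≤ ‖x‖ * μ i := by
    obtain ⟨ξ, hξ, hξx, hBξ⟩ := B.toLinearMap₁₂.exists_norm_eq_one_inner_eq_zero_apply_self_le hv hμ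
      (i := a) (j := ln) (by simp [a, Fin.ext_iff, hln]; omega)
      (hmono _ _ (by simp [a, Fin.le_def, hln]; omega)) x
    have hia : i ≤ a := by simp [a, Fin.le_def]; have := Fin.val_ne_of_ne hi; omega
    calc c₀ ≤ ‖x‖ * B ξ ξ := hc x hx ξ hξ hξx
      _ ≤ ‖x‖ * μ a := by gcongr; exact hBξ
      _ ≤ ‖x‖ * μ i := by gcongr; exact hmono _ _ hia
  have hprod : ∏ i, μ i ∈ Set.Icc lam Lam := by
    rw [← det_pd2_eq_prod hdiff hv hμ, hdet x hx]
    exact hg _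
  have hlast := div_pow_card_sub_one_mem_Icc_of_prod_mem_Icc (k := ln) hx0 hc₀ hlam
    (fun i hi => ⟨hlower i hi, hupper i⟩) hprod
  rw [Fintype.card_fin] at hlast
  exact ⟨fun i hi => ⟨(min_le_left _ _).trans (hlower i hi), (hupper i).trans (le_max_left _ _)⟩,
    (min_le_right _ _).trans hlast.1, hlast.2.trans (le_max_right _ _)⟩

theorem stmt5 (n : ℕ) (hn : 2 ≤ n) (ln : Fin n) (hln : (ln : ℕ) = n - 1)
    (lam Lam : ℝ) (hlam : 0 < lam) (hLam : lam ≤ Lam)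
    (C₀ c₀ : ℝ) (hC₀ : 0 < C₀) (hc₀ : 0 < c₀) :
    ∃ c C : ℝ, 0 < c ∧ 0 < C ∧
      ∀ (u g : Eu n → ℝ),
        -- u is a convex C² function on B₁ ∖ {0}
        ConvexOn ℝ (Metric.ball (0 : Eu n) 1) u →
        ContDiffOn ℝ 2 u (Metric.ball (0 : Eu n) 1 \ {0}) →
        -- det D²u = g(Du), with λ ≤ g ≤ Λ
        (∀ p, lam ≤ g p ∧ g p ≤ Lam) →
        (∀ x ∈ Metric.ball (0 : Eu n) 1 \ {0},
          (Matrix.of fun i j => pd2 u i j x).det = g (gradient u x)) →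
        -- |x|·‖D²u(x)‖ ≤ C₀
        (∀ x ∈ Metric.ball (0 : Eu n) 1 \ {0},
          ‖x‖ * ‖fderiv ℝ (fderiv ℝ u) x‖ ≤ C₀) →
        -- |x|·ξᵀD²u(x)ξ ≥ c₀ for unit ξ ⟂ x
        (∀ x ∈ Metric.ball (0 : Eu n) 1 \ {0}, ∀ ξ : Eu n, ‖ξ‖ = 1 →
          (inner ℝ ξ x : ℝ) = 0 → c₀ ≤ ‖x‖ * fderiv ℝ (fderiv ℝ u) x ξ ξ) →
        -- eigenvalue bounds: for any decreasing enumeration μ of the eigenvalues of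
        -- D²u(x) (with orthonormal eigenbasis v) …
        ∀ x ∈ Metric.ball (0 : Eu n) 1 \ {0},
        ∀ (μ : Fin n → ℝ) (v : Fin n → Eu n),
          Orthonormal ℝ v →
          (∀ i : Fin n, ∀ w : Eu n,
            fderiv ℝ (fderiv ℝ u) x (v i) w = μ i * (inner ℝ (v i) w : ℝ)) →
          (∀ i j : Fin n, i ≤ j → μ j ≤ μ i) →
          -- … c ≤ |x|·λᵢ ≤ C for i = 1,…,n-1 and c ≤ λₙ/|x|^{n-1} ≤ C
          (∀ i : Fin n, i ≠ ln → c ≤ ‖x‖ * μ i ∧ ‖x‖ * μ i ≤ C) ∧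
          c ≤ μ ln / ‖x‖ ^ (n - 1) ∧ μ ln / ‖x‖ ^ (n - 1) ≤ C :=
  stmt5_general n hn ln hln lam Lam hlam C₀ c₀ hC₀ hc₀
end
end

section
/- (Partial Legendre transform.) Let n ≥ 2, b ∈ ℝ, and let ψ ∈ C³(ℝⁿ₊) be such that the (n−1)×(n−1) matrix D²_{x'}ψ(x) is positive definite for every x ∈ ℝⁿ₊, and such that the map Φ(x) = (∇_{x'}ψ(x), x_n) is a C² diffeomorphism from ℝⁿ₊ onto an open set U ⊂ ℝⁿ₊. Define ψ* : U → ℝ by ψ*(Φ(x)) = x'·∇_{x'}ψ(x) − ψ(x). If ψ satisfies det M_b[ψ](x) = 1 for all x ∈ ℝⁿ₊, then ψ* is C² on U and satisfies ∂²ψ*/∂y_n²(y) + b·(∂ψ*/∂y_n(y))/y_n + det D²_{y'}ψ*(y) = 0 for all y ∈ U. -/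
open MeasureTheory
open scoped ENNReal

noncomputable section

/-- The matrix `M_b[ψ](x)`: Hessian of `ψ`, with the `(n,n)` entry replaced by
`ψ_{x_n x_n} + b ψ_{x_n}/x_n`.  Here `ln` denotes the last index. -/
def Mb {n : ℕ} (b : ℝ) (ψ : Eu n → ℝ) (ln : Fin n) (x : Eu n) :
    Matrix (Fin n) (Fin n) ℝ :=
  Matrix.of fun i j =>
    if i = ln ∧ j = ln then pd2 ψ ln ln x + b * pd ψ ln x / x ln
    else pd2 ψ i j x

/-!
Along `Φ = (∇_{x'}ψ, x_n)` the chain rule turns `ψ* ∘ Φ = x'·∇_{x'}ψ − ψ` into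
`D²_{x'}ψ · (∇_{y'}ψ* ∘ Φ − x') = 0` and `∂_{y_n}ψ* ∘ Φ = −∂_{x_n}ψ`; positive definiteness gives
`∇_{y'}ψ* ∘ Φ = x'`. Differentiating these once more shows that `B = D²_{y'}ψ*` inverts
`H = D²_{x'}ψ` and that, after eliminating the mixed column of `M_b[ψ]` with `v = ∂_{y_n}∇_{y'}ψ*`,
the remaining corner is `−(ψ*_{y_n y_n} + b ψ*_{y_n}/y_n)`. Hence
`1 = det M_b[ψ] = −det H · (ψ*_{y_n y_n} + b ψ*_{y_n}/y_n)` while `det H · det B = 1`.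
-/

open Finset Matrix Filter Topology

section PartialDerivatives

variable {m n : ℕ}

theorem pd_congr_of_eventuallyEq {f g : Eu n → ℝ} {x : Eu n} (h : f =ᶠ[𝓝 x] g) (j : Fin n) :
    pd f j x = pd g j x := by
  rw [pd, pd, h.fderiv_eq]

theorem pd_coord (i j : Fin n) (x : Eu n) :
    pd (fun z : Eu n => z i) j x = if i = j then 1 else 0 := by
  change fderiv ℝ (EuclideanSpace.proj (𝕜 := ℝ) i) x _ = _
  rw [ContinuousLinearMap.fderiv]
  simp [PiLp.single_apply]

theorem pd_comp {Φ : Eu m → Eu n} {f : Eu n → ℝ} {x : Eu m}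
    (hΦ : DifferentiableAt ℝ Φ x) (hf : DifferentiableAt ℝ f (Φ x)) (j : Fin m) :
    pd (fun z => f (Φ z)) j x = ∑ k, pd (fun z => Φ z k) j x * pd f k (Φ x) := by
  have hcomp (k : Fin n) : pd (fun z => Φ z k) j x = fderiv ℝ Φ x (EuclideanSpace.single j 1) k :=
    congrArg (· (EuclideanSpace.single j 1))
      ((EuclideanSpace.proj (𝕜 := ℝ) k).hasFDerivAt.comp x hΦ.hasFDerivAt).fderiv
  simp only [hcomp]
  simp only [pd, fderiv_fun_comp x hf hΦ, ContinuousLinearMap.comp_apply]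
  conv_lhs => rw [← (EuclideanSpace.basisFun (Fin n) ℝ).sum_repr (fderiv ℝ Φ x _)]
  simp [map_sum]

theorem ContDiffOn.pd {f : Eu n → ℝ} {S : Set (Eu n)} {k N : WithTop ℕ∞}
    (h : ContDiffOn ℝ N f S) (hS : IsOpen S) (hkN : k + 1 ≤ N) (i : Fin n) :
    ContDiffOn ℝ k (_root_.pd f i) S :=
  (ContinuousLinearMap.apply ℝ ℝ (EuclideanSpace.single i (1 : ℝ))).contDiff.comp_contDiffOn
    (h.fderiv_of_isOpen hS hkN)

theorem pd_sub {f g : Eu n → ℝ} {x : Eu n}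
    (hf : DifferentiableAt ℝ f x) (hg : DifferentiableAt ℝ g x) (j : Fin n) :
    pd (fun z => f z - g z) j x = pd f j x - pd g j x := by
  simp [pd, fderiv_fun_sub hf hg]

theorem pd_neg (f : Eu n → ℝ) (j : Fin n) (x : Eu n) :
    pd (fun z => -f z) j x = -pd f j x := by
  simp [pd, fderiv_fun_neg]

theorem pd_mul {f g : Eu n → ℝ} {x : Eu n}
    (hf : DifferentiableAt ℝ f x) (hg : DifferentiableAt ℝ g x) (j : Fin n) :
    pd (fun z => f z * g z) j x = f x * pd g j x + g x * pd f j x := by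
  simp [pd, fderiv_fun_mul hf hg]

theorem pd_sum {ι : Type*} {s : Finset ι} {f : ι → Eu n → ℝ} {x : Eu n}
    (h : ∀ i ∈ s, DifferentiableAt ℝ (f i) x) (j : Fin n) :
    pd (fun z => ∑ i ∈ s, f i z) j x = ∑ i ∈ s, pd (f i) j x := by
  simp [pd, fderiv_fun_sum h]

end PartialDerivatives

section BlockDeterminant

variable {m o R : Type*} [Fintype m] [Fintype o] [DecidableEq m] [DecidableEq o] [CommRing R]

theorem det_fromBlocks_of_mul_add_eq_zero {H : Matrix m m R} {c v : Matrix m o R}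
    (r : Matrix o m R) (d : Matrix o o R) (hv : H * v + c = 0) :
    (fromBlocks H c r d).det = H.det * (r * v + d).det := by
  have h : fromBlocks H c r d * fromBlocks 1 v 0 1 = fromBlocks H 0 r (r * v + d) := by
    simp [fromBlocks_multiply, hv]
  simpa [det_fromBlocks_zero₂₁, det_fromBlocks_zero₁₂] using congrArg det h

/-- With `B = H⁻¹` and `v = -B * c`, `r * v + d` is the Schur complement `d - r * H⁻¹ * c`. -/
theorem det_mul_det_fromBlocks_of_mul_eq_one {H B : Matrix m m R} {c v : Matrix m o R}
    (r : Matrix o m R) (d : Matrix o o R) (hB : H * B = 1) (hv : H * v + c = 0) :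
    B.det * (fromBlocks H c r d).det = (r * v + d).det := by
  rw [det_fromBlocks_of_mul_add_eq_zero r d hv, ← mul_assoc, mul_comm B.det, ← det_mul, hB,
    det_one, one_mul]

end BlockDeterminant

section PartialLegendre

variable {n : ℕ} (ψ : Eu n → ℝ) (ln : Fin n)

def partialHessian (x : Eu n) : Matrix {k : Fin n // k ≠ ln} {k : Fin n // k ≠ ln} ℝ :=
  Matrix.of fun i j => pd2 ψ i j x

def partialLegendreMap (x : Eu n) : Eu n :=
  (EuclideanSpace.equiv (Fin n) ℝ).symm fun i => if i = ln then x ln else pd ψ i x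

def partialLegendreValue (x : Eu n) : ℝ :=
  (∑ i ∈ univ.erase ln, x i * pd ψ i x) - ψ x

variable {ψ ln}

theorem partialLegendreMap_apply (x : Eu n) (k : Fin n) :
    partialLegendreMap ψ ln x k = if k = ln then x ln else pd ψ k x :=
  rfl

theorem differentiableAt_partialLegendreMap {x : Eu n}
    (hψ : ∀ i, DifferentiableAt ℝ (pd ψ i) x) :
    DifferentiableAt ℝ (partialLegendreMap ψ ln) x := by
  refine (differentiableAt_piLp _).2 fun k => ?_
  simp only [partialLegendreMap_apply]
  split_ifs
  exacts [(EuclideanSpace.proj (𝕜 := ℝ) ln).differentiableAt, hψ k]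

theorem pd_comp_partialLegendreMap {Φ : Eu n → Eu n} {f : Eu n → ℝ} {x : Eu n}
    (hΦ : Φ =ᶠ[𝓝 x] partialLegendreMap ψ ln) (hψ : ∀ i, DifferentiableAt ℝ (pd ψ i) x)
    (hf : DifferentiableAt ℝ f (Φ x)) (j : Fin n) :
    pd (fun z => f (Φ z)) j x =
      (if j = ln then pd f ln (Φ x) else 0) + ∑ k : {k // k ≠ ln}, pd2 ψ j k x * pd f k (Φ x) := by
  rw [hΦ.eq_of_nhds] at hf ⊢
  have hfΦ : (fun z => f (Φ z)) =ᶠ[𝓝 x] fun z => f (partialLegendreMap ψ ln z) :=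
    hΦ.fun_comp f
  rw [pd_congr_of_eventuallyEq hfΦ j,
    pd_comp (differentiableAt_partialLegendreMap hψ) hf j, Fintype.sum_eq_add_sum_subtype_ne _ ln]
  simp only [partialLegendreMap_apply, if_true, pd_coord]
  congr 1
  · rcases eq_or_ne j ln with rfl | h
    · simp
    · simp [h, h.symm]
  · refine sum_congr rfl fun k _ => ?_
    simp only [k.2, if_false]
    rfl

theorem pd_partialLegendreValue {x : Eu n} (hψ : DifferentiableAt ℝ ψ x)
    (hψ' : ∀ i, DifferentiableAt ℝ (pd ψ i) x) (j : Fin n) :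
    pd (partialLegendreValue ψ ln) j x =
      ∑ k : {k // k ≠ ln}, pd2 ψ j k x * x k - if j = ln then pd ψ ln x else 0 := by
  have hcoord (i : Fin n) : DifferentiableAt ℝ (fun z : Eu n => z i) x :=
    (EuclideanSpace.proj (𝕜 := ℝ) i).differentiableAt
  have hterm (i : Fin n) : DifferentiableAt ℝ (fun z : Eu n => z i * pd ψ i z) x :=
    (hcoord i).mul (hψ' i)
  unfold partialLegendreValue
  rw [pd_sub (DifferentiableAt.fun_sum fun i _ => hterm i) hψ,
    pd_sum fun i _ => hterm i]
  have hsub : ∀ g : Fin n → ℝ, ∑ i ∈ univ.erase ln, g i = ∑ k : {k // k ≠ ln}, g k :=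
    sum_subtype _ (by simp)
  simp only [pd_mul (hcoord _) (hψ' _)]
  simp only [pd_coord, mul_ite, mul_one, mul_zero, sum_add_distrib, sum_ite_eq', mem_erase,
    mem_univ, and_true]
  rw [hsub]
  by_cases h : j = ln <;> simp [h, pd2, mul_comm]

theorem ContDiffOn.partialLegendreValue {S : Set (Eu n)} {k N : WithTop ℕ∞}
    (hψ : ContDiffOn ℝ N ψ S) (hS : IsOpen S) (hkN : k + 1 ≤ N) :
    ContDiffOn ℝ k (_root_.partialLegendreValue ψ ln) S :=
  (ContDiffOn.sum fun i _ => (EuclideanSpace.proj (𝕜 := ℝ) i).contDiff.contDiffOn.mul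
    (hψ.pd hS hkN i)).sub (hψ.of_le (le_trans le_self_add hkN))

theorem pd_at_partialLegendreMap_of_comp_eq {Φ : Eu n → Eu n} {g : Eu n → ℝ} {x : Eu n}
    (hΦ : Φ =ᶠ[𝓝 x] partialLegendreMap ψ ln) (hpos : (partialHessian ψ ln x).PosDef)
    (hψ : DifferentiableAt ℝ ψ x) (hψ' : ∀ i, DifferentiableAt ℝ (pd ψ i) x)
    (hg : DifferentiableAt ℝ g (Φ x))
    (hgΦ : (fun z => g (Φ z)) =ᶠ[𝓝 x] partialLegendreValue ψ ln) :
    (∀ k ≠ ln, pd g k (Φ x) = x k) ∧ pd g ln (Φ x) = -pd ψ ln x := by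
  have key (j : Fin n) := (pd_comp_partialLegendreMap hΦ hψ' hg j).symm.trans
    ((pd_congr_of_eventuallyEq hgΦ j).trans (pd_partialLegendreValue hψ hψ' j))
  have hmul : partialHessian ψ ln x *ᵥ (fun k => pd g k (Φ x)) =
      partialHessian ψ ln x *ᵥ (fun k => x k) := by
    funext j
    simpa [mulVec, dotProduct, partialHessian, j.2] using key j
  have hfirst (k : {k // k ≠ ln}) : pd g k (Φ x) = x k :=
    congrFun (mulVec_injective_of_isUnit hpos.isUnit hmul) k
  refine ⟨fun k hk => hfirst ⟨k, hk⟩, ?_⟩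
  have hln := key ln
  simp only [if_true, hfirst] at hln
  linarith

theorem pd2_at_partialLegendreMap_of_pd_eq {Φ : Eu n → Eu n} {g : Eu n → ℝ} {x : Eu n}
    (hΦ : Φ =ᶠ[𝓝 x] partialLegendreMap ψ ln) (hψ' : ∀ i, DifferentiableAt ℝ (pd ψ i) x)
    (hg' : ∀ k, DifferentiableAt ℝ (pd g k) (Φ x))
    (hfirst : ∀ᶠ z in 𝓝 x, (∀ k ≠ ln, pd g k (Φ z) = z k) ∧ pd g ln (Φ z) = -pd ψ ln z)
    (j k : Fin n) :
    (if j = ln then pd2 g ln k (Φ x) else 0) +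
        ∑ m : {m // m ≠ ln}, pd2 ψ j m x * pd2 g m k (Φ x) =
      if k = ln then -pd2 ψ j ln x else if k = j then 1 else 0 := by
  refine (pd_comp_partialLegendreMap hΦ hψ' (hg' k) j).symm.trans ?_
  rcases eq_or_ne k ln with rfl | hk
  · rw [if_pos rfl, pd_congr_of_eventuallyEq (hfirst.mono fun z hz => hz.2) j, pd_neg]
    rfl
  · rw [if_neg hk, pd_congr_of_eventuallyEq (hfirst.mono fun z hz => hz.1 k hk) j, pd_coord]

theorem det_Mb_eq_det_fromBlocks (b : ℝ) (ψ : Eu n → ℝ) (ln : Fin n) (x : Eu n) :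
    (Mb b ψ ln x).det = (fromBlocks (partialHessian ψ ln x)
      (of fun i (_ : Unit) => pd2 ψ i ln x) (of fun _ j => pd2 ψ ln j x)
      (of fun _ _ => pd2 ψ ln ln x + b * pd ψ ln x / x ln)).det := by
  rw [← det_submatrix_equiv_self
    ((Equiv.optionEquivSumPUnit _).symm.trans (Equiv.optionSubtypeNe ln))]
  congr 1
  ext (⟨i, hi⟩ | i) (⟨j, hj⟩ | j) <;> simp_all [Mb, partialHessian]

theorem legendre_equation_of_pd2_relations {g : Eu n → ℝ} {b : ℝ} {x y : Eu n}
    (hM : (Mb b ψ ln x).det = 1) (hy : y ln = x ln) (hg : pd g ln y = -pd ψ ln x)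
    (hg2 : ∀ j k, (if j = ln then pd2 g ln k y else 0) +
        ∑ m : {m // m ≠ ln}, pd2 ψ j m x * pd2 g m k y =
      if k = ln then -pd2 ψ j ln x else if k = j then 1 else 0) :
    pd2 g ln ln y + b * pd g ln y / y ln + (partialHessian g ln y).det = 0 := by
  have hB : partialHessian ψ ln x * partialHessian g ln y = 1 := by
    ext i j
    simpa [mul_apply, one_apply, partialHessian, i.2, j.2, Subtype.ext_iff, eq_comm]
      using hg2 i j
  set v : Matrix {m // m ≠ ln} Unit ℝ := of fun m _ => pd2 g m ln y
  set r : Matrix Unit {m // m ≠ ln} ℝ := of fun _ j => pd2 ψ ln j x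
  set d : Matrix Unit Unit ℝ := of fun _ _ => pd2 ψ ln ln x + b * pd ψ ln x / x ln
  have hv : partialHessian ψ ln x * v + of (fun (i : {m // m ≠ ln}) _ => pd2 ψ i ln x) = 0 := by
    ext i _
    simpa [v, mul_apply, partialHessian, i.2, add_eq_zero_iff_eq_neg] using hg2 i ln
  have hd : r * v + d = of fun _ _ => -(pd2 g ln ln y + b * pd g ln y / y ln) := by
    ext
    have := hg2 ln ln
    simp only [if_true] at this
    simp only [r, v, d, Matrix.add_apply, mul_apply, of_apply, hg, hy, neg_div, mul_neg]
    linarith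
  have h := det_mul_det_fromBlocks_of_mul_eq_one r d hB hv
  rw [← det_Mb_eq_det_fromBlocks, hM, mul_one, hd, det_unique (n := Unit), of_apply] at h
  linarith

end PartialLegendre

theorem stmt10_general (n : ℕ) (ln : Fin n) (b : ℝ)
    (ψ : Eu n → ℝ)
    -- ψ ∈ C³(ℝⁿ₊)
    (hC3 : ContDiffOn ℝ 3 ψ {x : Eu n | 0 < x ln})
    -- D²_{x'}ψ is positive definite on ℝⁿ₊
    (hpos : ∀ x : Eu n, 0 < x ln →
      (Matrix.of fun (i j : {k : Fin n // k ≠ ln}) => pd2 ψ i.1 j.1 x).PosDef)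
    -- Φ(x) = (∇_{x'}ψ(x), x_n)
    (Φ : Eu n → Eu n)
    (hΦdef : ∀ x : Eu n, 0 < x ln →
      Φ x = (EuclideanSpace.equiv (Fin n) ℝ).symm
        (fun i => if i = ln then x ln else pd ψ i x))
    -- Φ is a C² diffeomorphism from ℝⁿ₊ onto the open set U ⊆ ℝⁿ₊, with inverse Ψ
    (U : Set (Eu n)) (hUopen : IsOpen U)
    (Ψ : Eu n → Eu n)
    (hmaps : ∀ x : Eu n, 0 < x ln → Φ x ∈ U)
    (hinv2 : ∀ y ∈ U, 0 < Ψ y ln ∧ Φ (Ψ y) = y)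
    (hΨC2 : ContDiffOn ℝ 2 Ψ U)
    -- ψ*(Φ(x)) = x'·∇_{x'}ψ(x) − ψ(x)
    (ψs : Eu n → ℝ)
    (hψs : ∀ x : Eu n, 0 < x ln →
      ψs (Φ x) = (∑ i ∈ Finset.univ.erase ln, x i * pd ψ i x) - ψ x)
    -- det M_b[ψ] = 1 on ℝⁿ₊
    (heq : ∀ x : Eu n, 0 < x ln → (Mb b ψ ln x).det = 1) :
    -- then ψ* is C² on U and solves ψ*_{nn} + b ψ*_n / y_n + det D²_{y'}ψ* = 0 there
    ContDiffOn ℝ 2 ψs U ∧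
    ∀ y ∈ U, pd2 ψs ln ln y + b * pd ψs ln y / y ln +
      (Matrix.of fun (i j : {k : Fin n // k ≠ ln}) => pd2 ψs i.1 j.1 y).det = 0 := by
  set S := {x : Eu n | 0 < x ln}
  have hS : IsOpen S := isOpen_lt continuous_const (EuclideanSpace.proj (𝕜 := ℝ) ln).continuous
  have hψ (x) (hx : x ∈ S) : DifferentiableAt ℝ ψ x :=
    (hC3.contDiffAt (hS.mem_nhds hx)).differentiableAt (by norm_num)
  have hψ' (x) (hx : x ∈ S) (i) : DifferentiableAt ℝ (pd ψ i) x :=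
    ((hC3.pd hS (k := 2) (by norm_num) i).contDiffAt (hS.mem_nhds hx)).differentiableAt
      (by norm_num)
  have hΦ (x) (hx : x ∈ S) : Φ =ᶠ[𝓝 x] partialLegendreMap ψ ln :=
    eventually_of_mem (hS.mem_nhds hx) hΦdef
  have hψsC2 : ContDiffOn ℝ 2 ψs U :=
    ((hC3.partialLegendreValue hS (by norm_num)).comp hΨC2 fun y hy => (hinv2 y hy).1).congr
      fun y hy => (congrArg ψs (hinv2 y hy).2).symm.trans (hψs _ (hinv2 y hy).1)
  have hψsdiff (y) (hy : y ∈ U) : DifferentiableAt ℝ ψs y :=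
    (hψsC2.contDiffAt (hUopen.mem_nhds hy)).differentiableAt (by norm_num)
  have hpdψsdiff (y) (hy : y ∈ U) (k) : DifferentiableAt ℝ (pd ψs k) y :=
    ((hψsC2.pd hUopen (k := 1) (by norm_num) k).contDiffAt (hUopen.mem_nhds hy)).differentiableAt
      (by norm_num)
  have hfirst (x) (hx : x ∈ S) :=
    pd_at_partialLegendreMap_of_comp_eq (hΦ x hx) (hpos x hx) (hψ x hx) (hψ' x hx)
      (hψsdiff _ (hmaps x hx)) (eventually_of_mem (hS.mem_nhds hx) hψs)
  refine ⟨hψsC2, fun y hy => ?_⟩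
  obtain ⟨hx, hxy⟩ := hinv2 y hy
  rw [← hxy]
  refine legendre_equation_of_pd2_relations (heq _ hx) ?_ (hfirst _ hx).2
    (pd2_at_partialLegendreMap_of_pd_eq (hΦ _ hx) (hψ' _ hx) (hpdψsdiff _ (hmaps _ hx))
      (eventually_of_mem (hS.mem_nhds hx) hfirst))
  rw [(hΦ _ hx).eq_of_nhds, partialLegendreMap_apply, if_pos rfl]

theorem stmt10 (n : ℕ) (hn : 2 ≤ n) (ln : Fin n) (hln : (ln : ℕ) = n - 1) (b : ℝ)
    (ψ : Eu n → ℝ)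
    -- ψ ∈ C³(ℝⁿ₊)
    (hC3 : ContDiffOn ℝ 3 ψ {x : Eu n | 0 < x ln})
    -- D²_{x'}ψ is positive definite on ℝⁿ₊
    (hpos : ∀ x : Eu n, 0 < x ln →
      (Matrix.of fun (i j : {k : Fin n // k ≠ ln}) => pd2 ψ i.1 j.1 x).PosDef)
    -- Φ(x) = (∇_{x'}ψ(x), x_n)
    (Φ : Eu n → Eu n)
    (hΦdef : ∀ x : Eu n, 0 < x ln →
      Φ x = (EuclideanSpace.equiv (Fin n) ℝ).symm
        (fun i => if i = ln then x ln else pd ψ i x))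
    -- Φ is a C² diffeomorphism from ℝⁿ₊ onto the open set U ⊆ ℝⁿ₊, with inverse Ψ
    (U : Set (Eu n)) (hUopen : IsOpen U) (hUsub : U ⊆ {x : Eu n | 0 < x ln})
    (Ψ : Eu n → Eu n)
    (hmaps : ∀ x : Eu n, 0 < x ln → Φ x ∈ U)
    (hinv1 : ∀ x : Eu n, 0 < x ln → Ψ (Φ x) = x)
    (hinv2 : ∀ y ∈ U, 0 < Ψ y ln ∧ Φ (Ψ y) = y)
    (hΦC2 : ContDiffOn ℝ 2 Φ {x : Eu n | 0 < x ln})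
    (hΨC2 : ContDiffOn ℝ 2 Ψ U)
    -- ψ*(Φ(x)) = x'·∇_{x'}ψ(x) − ψ(x)
    (ψs : Eu n → ℝ)
    (hψs : ∀ x : Eu n, 0 < x ln →
      ψs (Φ x) = (∑ i ∈ Finset.univ.erase ln, x i * pd ψ i x) - ψ x)
    -- det M_b[ψ] = 1 on ℝⁿ₊
    (heq : ∀ x : Eu n, 0 < x ln → (Mb b ψ ln x).det = 1) :
    -- then ψ* is C² on U and solves ψ*_{nn} + b ψ*_n / y_n + det D²_{y'}ψ* = 0 there
    ContDiffOn ℝ 2 ψs U ∧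
    ∀ y ∈ U, pd2 ψs ln ln y + b * pd ψs ln y / y ln +
      (Matrix.of fun (i j : {k : Fin n // k ≠ ln}) => pd2 ψs i.1 j.1 y).det = 0 :=
  stmt10_general n ln b ψ hC3 hpos Φ hΦdef U hUopen Ψ hmaps hinv2 hΨC2 ψs hψs heq
end
end

section
/- Let ε ∈ (0,1) and define u : ℝ² → ℝ by u(x,y) = x²/2 + |y|^{1+ε}/((1+ε)ε). Then: (i) u is strictly convex on ℝ²; (ii) for every (x,y) with y ≠ 0 one has (u_{xx}(x,y) − 1 + |y|^{1−ε})·u_{yy}(x,y) − u_{xy}(x,y)² = 1; (iii) u is not C^{1,1}: the gradient of u is not Lipschitz on any neighborhood of the line {y = 0}. -/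
/-!
Away from `y = 0` the gradient of `u` is `(x, |y| ^ (ε - 1) * y / ε)`, so its Hessian is
`diag(1, |y| ^ (ε - 1))`, which gives the identity (ii). On the `y`-axis, `ε • ∂u/∂y` is
`|y| ^ (ε - 1) * y`, whose difference quotients `|y| ^ (ε - 1)` at `0` are unbounded because
`ε < 1`; hence the gradient is not Lipschitz near any point of `{y = 0}`. Strict convexity holds
because `u` is a sum of strictly convex functions of the two coordinates separately.
-/

open MeasureTheory
open scoped ENNReal

noncomputable section

open Real Set Topology

theorem StrictConvexOn.div_const {E : Type*} [AddCommMonoid E] [Module ℝ E] {s : Set E}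
    {f : E → ℝ} (hf : StrictConvexOn ℝ s f) {c : ℝ} (hc : 0 < c) :
    StrictConvexOn ℝ s fun x => f x / c := by
  refine ⟨hf.1, fun x hx y hy hxy a b ha hb hab => ?_⟩
  have key := hf.2 hx hy hxy ha hb hab
  simp only [smul_eq_mul] at key ⊢
  calc f (a • x + b • y) / c < (a * f x + b * f y) / c := div_lt_div_of_pos_right key hc
    _ = a * (f x / c) + b * (f y / c) := by ring

theorem strictConvexOn_abs_rpow {p : ℝ} (hp : 1 < p) :
    StrictConvexOn ℝ univ fun x : ℝ => |x| ^ p := by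
  refine ⟨convex_univ, fun x _ y _ hxy a b ha hb hab => ?_⟩
  simp only [smul_eq_mul]
  have hp0 : 0 < p := by linarith
  have htri : |a * x + b * y| ≤ a * |x| + b * |y| := by
    simpa [abs_mul, abs_of_pos ha, abs_of_pos hb] using abs_add_le (a * x) (b * y)
  by_cases hxy' : |x| = |y|
  · -- then `y = -x ≠ 0`, and the triangle inequality is strict
    have hy : y = -x := by linarith [(abs_eq_abs.mp hxy').resolve_left hxy]
    have hx : x ≠ 0 := fun h => hxy (by simp [hy, h])
    have hlt : |a * x + b * y| < |x| := by
      rw [hy, show a * x + b * -x = (a - b) * x by ring, abs_mul]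
      exact mul_lt_of_lt_one_left (abs_pos.mpr hx) (abs_lt.mpr ⟨by linarith, by linarith⟩)
    calc |a * x + b * y| ^ p < |x| ^ p := rpow_lt_rpow (abs_nonneg _) hlt hp0
      _ = a * |x| ^ p + b * |y| ^ p := by rw [← hxy', ← add_mul, hab, one_mul]
  · calc |a * x + b * y| ^ p ≤ (a * |x| + b * |y|) ^ p :=
          rpow_le_rpow (abs_nonneg _) htri hp0.le
      _ < a * |x| ^ p + b * |y| ^ p := by
          simpa using (strictConvexOn_rpow hp).2 (abs_nonneg x) (abs_nonneg y) hxy' ha hb hab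

theorem strictConvexOn_univ_add_coord {f g : ℝ → ℝ} (hf : StrictConvexOn ℝ univ f)
    (hg : StrictConvexOn ℝ univ g) :
    StrictConvexOn ℝ univ fun p : Eu 2 => f (p 0) + g (p 1) := by
  refine ⟨convex_univ, fun p _ q _ hpq a b ha hb hab => ?_⟩
  have hf_le := hf.convexOn.2 (mem_univ (p 0)) (mem_univ (q 0)) ha.le hb.le hab
  have hg_le := hg.convexOn.2 (mem_univ (p 1)) (mem_univ (q 1)) ha.le hb.le hab
  simp only [PiLp.add_apply, PiLp.smul_apply, smul_eq_mul] at hf_le hg_le ⊢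
  by_cases h0 : p 0 = q 0
  · have h1 : p 1 ≠ q 1 := fun h1 => hpq (by ext i; fin_cases i <;> assumption)
    have := hg.2 (mem_univ _) (mem_univ _) h1 ha hb hab
    simp only [smul_eq_mul] at this
    linarith
  · have := hf.2 (mem_univ _) (mem_univ _) h0 ha hb hab
    simp only [smul_eq_mul] at this
    linarith

theorem hasDerivAt_abs_rpow_mul_self (r : ℝ) {t : ℝ} (ht : t ≠ 0) :
    HasDerivAt (fun t => |t| ^ r * t) ((r + 1) * |t| ^ r) t := by
  have habs : 0 < |t| := abs_pos.mpr ht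
  refine (((hasDerivAt_abs ht).rpow_const (p := r) (Or.inl habs.ne')).mul
    (hasDerivAt_id' t)).congr_deriv ?_
  calc _ = r * (|t| ^ r / |t|) * (SignType.sign t * t) + |t| ^ r := by
        rw [rpow_sub_one habs.ne']; ring
    _ = (r + 1) * |t| ^ r := by rw [sign_mul_self]; field_simp

theorem hasDerivAt_abs_rpow_sub_one_mul_self_div {ε : ℝ} (hε : ε ≠ 0) {y : ℝ} (hy : y ≠ 0) :
    HasDerivAt (fun t => |t| ^ (ε - 1) * t / ε) (|y| ^ (ε - 1)) y := by
  refine ((hasDerivAt_abs_rpow_mul_self (ε - 1) hy).div_const ε).congr_deriv ?_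
  field_simp
  ring

theorem not_lipschitzOnWith_abs_rpow_mul_self {r : ℝ} (hr : r < 0) {s : Set ℝ} (hs : s ∈ 𝓝 0)
    (L : NNReal) : ¬ LipschitzOnWith L (fun t => |t| ^ r * t) s := by
  intro hL
  obtain ⟨t, ⟨(ht : 0 < t), hts⟩, hLt⟩ :=
    (Filter.Eventually.and (inter_mem_nhdsWithin (Ioi 0) hs)
      ((tendsto_rpow_neg_nhdsGT_zero hr).eventually_gt_atTop (L : ℝ))).exists
  have h := hL.dist_le_mul t hts 0 (mem_of_mem_nhds hs)
  simp only [abs_zero, mul_zero, dist_zero_right, norm_mul, norm_eq_abs,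
    abs_of_pos ht, abs_of_pos (rpow_pos_of_pos ht r)] at h
  exact absurd (le_of_mul_le_mul_right h ht) (not_le.mpr hLt)

theorem pd_comp_coord {n : ℕ} {f : ℝ → ℝ} {f' : ℝ} {x : Eu n} {j : Fin n}
    (hf : HasDerivAt f f' (x j)) (i : Fin n) :
    pd (fun q => f (q j)) i x = if j = i then f' else 0 := by
  have hd : HasFDerivAt (fun q : Eu n => f (q j)) (f' • EuclideanSpace.proj j) x :=
    hf.comp_hasFDerivAt x (EuclideanSpace.proj j : Eu n →L[ℝ] ℝ).hasFDerivAt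
  rw [pd, hd.fderiv]
  simp

namespace MongeAmpereExample

variable {ε : ℝ} {u : Eu 2 → ℝ}

theorem strictConvexOn (hε : 0 < ε)
    (hu : ∀ p : Eu 2, u p = (p 0) ^ 2 / 2 + |p 1| ^ (1 + ε) / ((1 + ε) * ε)) :
    StrictConvexOn ℝ univ u := by
  obtain rfl : u = _ := funext hu
  exact strictConvexOn_univ_add_coord ((Even.strictConvexOn_pow even_two two_ne_zero).div_const
    two_pos) ((strictConvexOn_abs_rpow (by linarith)).div_const (by positivity))

theorem hasFDerivAt (hε : 0 < ε)
    (hu : ∀ p : Eu 2, u p = (p 0) ^ 2 / 2 + |p 1| ^ (1 + ε) / ((1 + ε) * ε)) (p : Eu 2) :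
    HasFDerivAt u (p 0 • EuclideanSpace.proj (𝕜 := ℝ) 0
      + (|p 1| ^ (ε - 1) * p 1 / ε) • EuclideanSpace.proj (𝕜 := ℝ) 1) p := by
  obtain rfl : u = _ := funext hu
  have hx : HasDerivAt (fun t : ℝ => t ^ 2 / 2) (p 0) (p 0) := by
    simpa using (hasDerivAt_pow 2 (p 0)).div_const 2
  have hy : HasDerivAt (fun t : ℝ => |t| ^ (1 + ε) / ((1 + ε) * ε))
      (|p 1| ^ (ε - 1) * p 1 / ε) (p 1) := by
    refine ((hasDerivAt_abs_rpow (p 1) (by linarith)).div_const _).congr_deriv ?_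
    rw [show 1 + ε - 2 = ε - 1 by ring]
    field_simp
  exact (hx.comp_hasFDerivAt p (EuclideanSpace.proj (0 : Fin 2) : Eu 2 →L[ℝ] ℝ).hasFDerivAt).add
    (hy.comp_hasFDerivAt p (EuclideanSpace.proj (1 : Fin 2) : Eu 2 →L[ℝ] ℝ).hasFDerivAt)

theorem pd_zero (hε : 0 < ε)
    (hu : ∀ p : Eu 2, u p = (p 0) ^ 2 / 2 + |p 1| ^ (1 + ε) / ((1 + ε) * ε)) :
    pd u 0 = fun q => q 0 := by
  funext q
  simp [pd, (hasFDerivAt hε hu q).fderiv]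

theorem pd_one (hε : 0 < ε)
    (hu : ∀ p : Eu 2, u p = (p 0) ^ 2 / 2 + |p 1| ^ (1 + ε) / ((1 + ε) * ε)) :
    pd u 1 = fun q => |q 1| ^ (ε - 1) * q 1 / ε := by
  funext q
  simp [pd, (hasFDerivAt hε hu q).fderiv]

theorem pd2_zero_zero (hε : 0 < ε)
    (hu : ∀ p : Eu 2, u p = (p 0) ^ 2 / 2 + |p 1| ^ (1 + ε) / ((1 + ε) * ε)) (p : Eu 2) :
    pd2 u 0 0 p = 1 := by
  rw [pd2, pd_zero hε hu, pd_comp_coord (hasDerivAt_id' _), if_pos rfl]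

theorem pd2_zero_one (hε : 0 < ε)
    (hu : ∀ p : Eu 2, u p = (p 0) ^ 2 / 2 + |p 1| ^ (1 + ε) / ((1 + ε) * ε)) {p : Eu 2}
    (hp : p 1 ≠ 0) : pd2 u 0 1 p = 0 := by
  rw [pd2, pd_one hε hu, pd_comp_coord (hasDerivAt_abs_rpow_sub_one_mul_self_div hε.ne' hp),
    if_neg (by decide)]

theorem pd2_one_one (hε : 0 < ε)
    (hu : ∀ p : Eu 2, u p = (p 0) ^ 2 / 2 + |p 1| ^ (1 + ε) / ((1 + ε) * ε)) {p : Eu 2}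
    (hp : p 1 ≠ 0) : pd2 u 1 1 p = |p 1| ^ (ε - 1) := by
  rw [pd2, pd_one hε hu, pd_comp_coord (hasDerivAt_abs_rpow_sub_one_mul_self_div hε.ne' hp),
    if_pos rfl]

theorem not_lipschitzOnWith_fderiv (hε : ε ∈ Ioo 0 1)
    (hu : ∀ p : Eu 2, u p = (p 0) ^ 2 / 2 + |p 1| ^ (1 + ε) / ((1 + ε) * ε)) {V : Set (Eu 2)}
    (hV : V ∈ 𝓝 0) (L : NNReal) : ¬ LipschitzOnWith L (fderiv ℝ u) V := by
  intro hL
  set e : Eu 2 := EuclideanSpace.single 1 1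
  set ι : ℝ →L[ℝ] Eu 2 := ContinuousLinearMap.toSpanSingleton ℝ e
  -- restricted to the `y`-axis, `ε • ∂u/∂y` is the non-Lipschitz profile `t ↦ |t| ^ (ε - 1) * t`
  set ev : (Eu 2 →L[ℝ] ℝ) →L[ℝ] ℝ := ε • ContinuousLinearMap.apply ℝ ℝ e
  have hprofile : ev ∘ fderiv ℝ u ∘ ι = fun t => |t| ^ (ε - 1) * t := by
    funext t
    have h : fderiv ℝ u (t • e) e = |t| ^ (ε - 1) * t / ε := by
      simpa [pd, e] using congrFun (pd_one hε.1 hu) (t • e)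
    simp only [Function.comp_apply, ev, ι, smul_apply,
      ContinuousLinearMap.apply_apply, ContinuousLinearMap.toSpanSingleton_apply, smul_eq_mul, h]
    field_simp [hε.1.ne']
  have hlip := ev.lipschitz.comp_lipschitzOnWith
    (hL.comp ι.lipschitz.lipschitzOnWith (mapsTo_preimage ι V))
  rw [hprofile] at hlip
  exact not_lipschitzOnWith_abs_rpow_mul_self (by linarith [hε.2])
    (ι.continuous.continuousAt.preimage_mem_nhds (by simpa using hV)) _ hlip

end MongeAmpereExample

open MongeAmpereExample in
theorem stmt11 (ε : ℝ) (hε : ε ∈ Set.Ioo (0 : ℝ) 1)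
    (u : Eu 2 → ℝ)
    (hu : ∀ p : Eu 2, u p = (p 0) ^ 2 / 2 + |p 1| ^ (1 + ε) / ((1 + ε) * ε)) :
    -- (i) u is strictly convex on ℝ²
    StrictConvexOn ℝ Set.univ u ∧
    -- (ii) (u_{xx} − 1 + |y|^{1−ε})·u_{yy} − u_{xy}² = 1 for y ≠ 0
    (∀ p : Eu 2, p 1 ≠ 0 →
      (pd2 u 0 0 p - 1 + |p 1| ^ (1 - ε)) * pd2 u 1 1 p - (pd2 u 0 1 p) ^ 2 = 1) ∧
    -- (iii) the gradient of u is not Lipschitz on any neighborhood of {y = 0}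
    (∀ V : Set (Eu 2), IsOpen V → {p : Eu 2 | p 1 = 0} ⊆ V →
      ∀ L : NNReal, ¬ LipschitzOnWith L (fun p => fderiv ℝ u p) V) := by
  refine ⟨strictConvexOn hε.1 hu, fun p hp => ?_, fun V hV hsub L =>
    not_lipschitzOnWith_fderiv hε hu (hV.mem_nhds (hsub (by simp))) L⟩
  rw [pd2_zero_zero hε.1 hu, pd2_one_one hε.1 hu hp, pd2_zero_one hε.1 hu hp, sub_self,
    zero_add, ← rpow_add (abs_pos.mpr hp)]
  norm_num
end
end

section
/- Let n ≥ 2, b > 1, and p > n + b. Let u be bounded on ℝⁿ₊, C² in ℝⁿ₊ and C¹ on the closed half-space, and suppose −Δu − b·(∂_n u)/x_n = f in ℝⁿ₊, where f is measurable and satisfies ∫_K |f|^p x_n^b dx < ∞ for every compact subset K of the closed half-space. Then ∂_n u(x',0) = 0 for every x' ∈ ℝ^{n-1}. -/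
/-!
The equation says that the weighted field `x_n ^ b ∇u` has divergence `-x_n ^ b f`. Apply the
divergence theorem on a box `Q × [0, t]` standing on the boundary: the bottom face carries no flux
since `x_n ^ b` vanishes there, the lateral faces carry `O(t ^ (b + 1))` since `∇u` is continuous
up to the boundary, and by Hölder's inequality for the measure `x_n ^ b dx` the bulk term is
`O(t ^ ((b + 1)(1 - 1/p)))`. Dividing by `t ^ b`, the integral of `∂_n u(·, t)` over `Q` is
`O(t ^ (1 - (b + 1)/p) + t)`, which tends to `0` as `t → 0` because `p > b + 1`. So `∂_n u(·, 0)`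
integrates to zero over every cube, and being continuous it vanishes.
-/

open MeasureTheory
open scoped ENNReal

noncomputable section

open Set Filter Topology

section WeightedHolder

variable {α : Type*} [MeasurableSpace α] {μ : Measure α}

lemma memLp_ofReal_of_integrable_rpow {g : α → ℝ} {p : ℝ} (hp : 0 < p) (hg : 0 ≤ᵐ[μ] g)
    (hgm : AEStronglyMeasurable g μ) (hgp : Integrable (fun x => g x ^ p) μ) :
    MemLp g (ENNReal.ofReal p) μ := by
  refine (integrable_norm_rpow_iff hgm (by simpa using hp) ENNReal.ofReal_ne_top).mp ?_
  rw [ENNReal.toReal_ofReal hp.le]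
  refine hgp.congr ?_
  filter_upwards [hg] with x hx
  rw [Real.norm_of_nonneg hx]

variable {p q : ℝ} {w F : α → ℝ}

lemma rpow_inv_rpow_ae_eq (hq : q ≠ 0) (hw : 0 ≤ᵐ[μ] w) :
    (fun x => (w x ^ q⁻¹) ^ q) =ᵐ[μ] w := by
  filter_upwards [hw] with x hx using Real.rpow_inv_rpow hx hq

lemma rpow_mul_abs_rpow_ae_eq (hp : p ≠ 0) (hw : 0 ≤ᵐ[μ] w) :
    (fun x => (w x ^ p⁻¹ * |F x|) ^ p) =ᵐ[μ] fun x => |F x| ^ p * w x := by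
  filter_upwards [hw] with x (hx : 0 ≤ w x)
  rw [Real.mul_rpow (Real.rpow_nonneg hx _) (abs_nonneg _), Real.rpow_inv_rpow hx hp, mul_comm]

/-- Hölder's inequality for `w μ` is Hölder's inequality for `μ` applied to the factorisation
`w |F| = (w ^ p⁻¹ |F|) * w ^ q⁻¹`. -/
lemma memLp_weighted_factors (hpq : p.HolderConjugate q) (hw : 0 ≤ᵐ[μ] w)
    (hwm : AEMeasurable w μ) (hF : AEMeasurable F μ)
    (hFw : Integrable (fun x => |F x| ^ p * w x) μ) (hwi : Integrable w μ) :
    MemLp (fun x => w x ^ p⁻¹ * |F x|) (ENNReal.ofReal p) μ ∧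
      MemLp (fun x => w x ^ q⁻¹) (ENNReal.ofReal q) μ :=
  ⟨memLp_ofReal_of_integrable_rpow hpq.pos
      (by filter_upwards [hw] with x hx using mul_nonneg (Real.rpow_nonneg hx _) (abs_nonneg _))
      ((hwm.pow_const _).mul hF.abs).aestronglyMeasurable
      (hFw.congr (rpow_mul_abs_rpow_ae_eq hpq.ne_zero hw).symm),
    memLp_ofReal_of_integrable_rpow hpq.symm.pos
      (by filter_upwards [hw] with x hx using Real.rpow_nonneg hx _)
      (hwm.pow_const _).aestronglyMeasurable
      (hwi.congr (rpow_inv_rpow_ae_eq hpq.symm.ne_zero hw).symm)⟩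

lemma weighted_factors_mul_ae_eq (hpq : p.HolderConjugate q) (hw : 0 ≤ᵐ[μ] w) :
    (fun x => w x ^ p⁻¹ * |F x| * w x ^ q⁻¹) =ᵐ[μ] fun x => w x * |F x| := by
  filter_upwards [hw] with x (hx : 0 ≤ w x)
  rw [mul_right_comm, ← Real.rpow_add' hx (by rw [hpq.inv_add_inv_eq_one]; norm_num),
    hpq.inv_add_inv_eq_one, Real.rpow_one]

lemma integrable_weighted_mul (hpq : p.HolderConjugate q) (hw : 0 ≤ᵐ[μ] w)
    (hwm : AEMeasurable w μ) (hF : AEMeasurable F μ)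
    (hFw : Integrable (fun x => |F x| ^ p * w x) μ) (hwi : Integrable w μ) :
    Integrable (fun x => w x * F x) μ := by
  obtain ⟨h1, h2⟩ := memLp_weighted_factors hpq hw hwm hF hFw hwi
  have := hpq.ennrealOfReal
  refine ((h1.integrable_mul h2).congr (weighted_factors_mul_ae_eq hpq hw)).mono'
    (hwm.mul hF).aestronglyMeasurable ?_
  filter_upwards [hw] with x (hx : 0 ≤ w x)
  rw [norm_mul, Real.norm_of_nonneg hx, Real.norm_eq_abs]

lemma integral_weighted_mul_abs_le (hpq : p.HolderConjugate q) (hw : 0 ≤ᵐ[μ] w)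
    (hwm : AEMeasurable w μ) (hF : AEMeasurable F μ)
    (hFw : Integrable (fun x => |F x| ^ p * w x) μ) (hwi : Integrable w μ) :
    ∫ x, w x * |F x| ∂μ ≤ (∫ x, |F x| ^ p * w x ∂μ) ^ (1 / p) * (∫ x, w x ∂μ) ^ (1 / q) := by
  obtain ⟨h1, h2⟩ := memLp_weighted_factors hpq hw hwm hF hFw hwi
  have holder := integral_mul_le_Lp_mul_Lq_of_nonneg hpq
    (by filter_upwards [hw] with x hx using mul_nonneg (Real.rpow_nonneg hx _) (abs_nonneg _))
    (by filter_upwards [hw] with x hx using Real.rpow_nonneg hx _) h1 h2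
  rwa [integral_congr_ae (weighted_factors_mul_ae_eq hpq hw),
    integral_congr_ae (rpow_mul_abs_rpow_ae_eq hpq.ne_zero hw),
    integral_congr_ae (rpow_inv_rpow_ae_eq hpq.symm.ne_zero hw)] at holder

lemma abs_setIntegral_weighted_le (hpq : p.HolderConjugate q) {S : Set α} (hS : MeasurableSet S)
    (hSfin : μ S ≠ ∞) {T : ℝ} (hw : ∀ x ∈ S, 0 ≤ w x ∧ w x ≤ T) (hwm : Measurable w)
    (hF : Measurable F) (hFw : IntegrableOn (fun x => |F x| ^ p * w x) S μ) :
    |∫ x in S, w x * F x ∂μ| ≤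
      (∫ x in S, |F x| ^ p * w x ∂μ) ^ (1 / p) * (T * μ.real S) ^ (1 / q) := by
  have hw0 : 0 ≤ᵐ[μ.restrict S] w := ae_restrict_of_forall_mem hS fun x hx => (hw x hx).1
  have hwS : IntegrableOn w S μ :=
    (integrableOn_const (C := T) hSfin).mono' hwm.aestronglyMeasurable
      (ae_restrict_of_forall_mem hS fun x hx =>
        (Real.norm_of_nonneg (hw x hx).1).trans_le (hw x hx).2)
  have hwT : ∫ x in S, w x ∂μ ≤ T * μ.real S := by
    calc ∫ x in S, w x ∂μ ≤ ∫ _ in S, T ∂μ :=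
          setIntegral_mono_on hwS (integrableOn_const hSfin) hS fun x hx => (hw x hx).2
      _ = T * μ.real S := by rw [setIntegral_const, smul_eq_mul, mul_comm]
  calc |∫ x in S, w x * F x ∂μ|
      ≤ ∫ x in S, |w x * F x| ∂μ := by
        simpa only [Real.norm_eq_abs] using norm_integral_le_integral_norm (fun x => w x * F x)
    _ = ∫ x in S, w x * |F x| ∂μ := by
        refine setIntegral_congr_fun hS fun x hx => ?_
        rw [abs_mul, abs_of_nonneg (hw x hx).1]
    _ ≤ (∫ x in S, |F x| ^ p * w x ∂μ) ^ (1 / p) * (∫ x in S, w x ∂μ) ^ (1 / q) :=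
        integral_weighted_mul_abs_le hpq hw0 hwm.aemeasurable hF.aemeasurable hFw hwS
    _ ≤ (∫ x in S, |F x| ^ p * w x ∂μ) ^ (1 / p) * (T * μ.real S) ^ (1 / q) := by
        gcongr
        · exact Real.rpow_nonneg (setIntegral_nonneg hS fun x hx =>
            mul_nonneg (Real.rpow_nonneg (abs_nonneg _) _) (hw x hx).1) _
        · exact integral_nonneg_of_ae hw0
        · exact one_div_nonneg.mpr hpq.symm.nonneg

end WeightedHolder

lemma eq_zero_of_forall_setIntegral_closedBall_eq_zero {X : Type*} [PseudoMetricSpace X]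
    [ProperSpace X] [MeasurableSpace X] [OpensMeasurableSpace X] {μ : Measure X}
    [μ.IsOpenPosMeasure] [IsFiniteMeasureOnCompacts μ] {h : X → ℝ} (hh : Continuous h) {x : X}
    (H : ∀ r > 0, ∫ y in Metric.closedBall x r, h y ∂μ = 0) : h x = 0 := by
  by_contra hx
  have hε : 0 < |h x| / 2 := by positivity
  obtain ⟨δ, hδ, hnear⟩ := Metric.continuousAt_iff.mp hh.continuousAt _ hε
  set B := Metric.closedBall x (δ / 2)
  have hBfin : μ B < ⊤ := (isCompact_closedBall x _).measure_lt_top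
  have hBpos : 0 < μ.real B :=
    ENNReal.toReal_pos (Metric.measure_closedBall_pos μ x (by positivity)).ne' hBfin.ne
  have hmean : ∫ y in B, (h y - h x) ∂μ = -(μ.real B * h x) := by
    rw [integral_sub (hh.continuousOn.integrableOn_compact' (isCompact_closedBall x _)
      Metric.isClosed_closedBall.measurableSet)
      (integrableOn_const hBfin.ne), H _ (by positivity), setIntegral_const, smul_eq_mul, zero_sub]
  have hsmall : ‖∫ y in B, (h y - h x) ∂μ‖ ≤ |h x| / 2 * μ.real B :=
    norm_setIntegral_le_of_norm_le_const hBfin fun y hy =>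
      (hnear ((Metric.mem_closedBall.mp hy).trans_lt (half_lt_self hδ))).le
  rw [hmean, norm_neg, Real.norm_eq_abs, abs_mul, abs_of_pos hBpos] at hsmall
  nlinarith [abs_pos.mpr hx]

section Box

variable {m : ℕ} {lo hi : Fin (m + 1) → ℝ}

lemma measureReal_Icc_comp_succAbove_mul (hle : lo ≤ hi) (i : Fin (m + 1)) :
    volume.real (Icc (lo ∘ i.succAbove) (hi ∘ i.succAbove)) * (hi i - lo i) =
      volume.real (Icc lo hi) := by
  rw [measureReal_def, measureReal_def, Real.volume_Icc_pi_toReal hle,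
    Real.volume_Icc_pi_toReal (a := lo ∘ i.succAbove) (b := hi ∘ i.succAbove) fun j => hle _,
    Fin.prod_univ_succAbove _ i, mul_comm]
  rfl

lemma abs_setIntegral_face_le {f : (Fin (m + 1) → ℝ) → ℝ} {M : ℝ}
    (hM : ∀ x ∈ Icc lo hi, |f x| ≤ M) (i : Fin (m + 1)) {c : ℝ} (hc : c ∈ Icc (lo i) (hi i)) :
    |∫ z in Icc (lo ∘ i.succAbove) (hi ∘ i.succAbove), f (i.insertNth c z)| ≤
      M * volume.real (Icc (lo ∘ i.succAbove) (hi ∘ i.succAbove)) := by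
  simpa only [Real.norm_eq_abs] using
    norm_setIntegral_le_of_norm_le_const (s := Icc (lo ∘ i.succAbove) (hi ∘ i.succAbove))
      isCompact_Icc.measure_lt_top fun z hz =>
      (Real.norm_eq_abs _).trans_le (hM _ (Fin.insertNth_mem_Icc.mpr ⟨hc, hz⟩))

lemma pi_Ioo_ae_eq_Icc : (univ.pi fun i => Ioo (lo i) (hi i)) =ᵐ[volume] Icc lo hi := by
  rw [volume_pi]
  exact Measure.univ_pi_Ioo_ae_eq_Icc

lemma setIntegral_Icc_congr_of_eqOn {f g : (Fin (m + 1) → ℝ) → ℝ}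
    (h : EqOn f g (univ.pi fun i => Ioo (lo i) (hi i))) :
    ∫ x in Icc lo hi, f x = ∫ x in Icc lo hi, g x := by
  rw [← setIntegral_congr_set pi_Ioo_ae_eq_Icc,
    setIntegral_congr_fun (MeasurableSet.univ_pi fun _ => measurableSet_Ioo) h,
    setIntegral_congr_set pi_Ioo_ae_eq_Icc]

lemma IntegrableOn.Icc_congr_of_eqOn {f g : (Fin (m + 1) → ℝ) → ℝ}
    (hg : IntegrableOn g (Icc lo hi)) (h : EqOn f g (univ.pi fun i => Ioo (lo i) (hi i))) :
    IntegrableOn f (Icc lo hi) :=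
  ((hg.congr_set_ae pi_Ioo_ae_eq_Icc).congr_fun h.symm
    (MeasurableSet.univ_pi fun _ => measurableSet_Ioo)).congr_set_ae pi_Ioo_ae_eq_Icc.symm

theorem abs_integral_divergence_sub_flux_le (hle : lo ≤ hi) (k : Fin (m + 1))
    (f : Fin (m + 1) → (Fin (m + 1) → ℝ) → ℝ)
    (f' : Fin (m + 1) → (Fin (m + 1) → ℝ) → (Fin (m + 1) → ℝ) →L[ℝ] ℝ)
    (hc : ∀ i, ContinuousOn (f i) (Icc lo hi))
    (hd : ∀ x ∈ univ.pi fun i => Ioo (lo i) (hi i), ∀ i, HasFDerivAt (f i) (f' i x) x)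
    (hint : IntegrableOn (fun x => ∑ i, f' i x (Pi.single i 1)) (Icc lo hi))
    {M : ℝ} (hM : ∀ i ≠ k, ∀ x ∈ Icc lo hi, |f i x| ≤ M) :
    |(∫ x in Icc lo hi, ∑ i, f' i x (Pi.single i 1)) -
        ((∫ z in Icc (lo ∘ k.succAbove) (hi ∘ k.succAbove), f k (k.insertNth (hi k) z)) -
          ∫ z in Icc (lo ∘ k.succAbove) (hi ∘ k.succAbove), f k (k.insertNth (lo k) z))| ≤
      2 * M * ∑ j : Fin m,
        volume.real (Icc (lo ∘ (k.succAbove j).succAbove) (hi ∘ (k.succAbove j).succAbove)) := by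
  rw [integral_divergence_of_hasFDerivAt_off_countable' lo hi hle f f' ∅ countable_empty hc
    (by simpa using hd) hint, Fin.sum_univ_succAbove _ k, add_sub_cancel_left, Finset.mul_sum]
  refine (Finset.abs_sum_le_sum_abs _ _).trans (Finset.sum_le_sum fun j _ => ?_)
  have hM' := hM _ (Fin.succAbove_ne k j)
  have hfront := abs_setIntegral_face_le hM' (k.succAbove j) ⟨hle _, le_rfl⟩
  have hback := abs_setIntegral_face_le hM' (k.succAbove j) ⟨le_rfl, hle _⟩
  exact (abs_sub _ _).trans (by linarith)

end Box

section HalfSpace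

variable {m : ℕ} {k : Fin (m + 1)} {b : ℝ}

lemma insertNth_le_insertNth {a c : Fin m → ℝ} (hac : a ≤ c) {s t : ℝ} (hst : s ≤ t) :
    (k.insertNth s a : Fin (m + 1) → ℝ) ≤ k.insertNth t c := fun i => by
  rcases k.eq_self_or_eq_succAbove i with rfl | ⟨j, rfl⟩
  · simpa using hst
  · simpa using hac j

lemma apply_mem_Icc_of_mem_Icc_insertNth {a c : Fin m → ℝ} {s t : ℝ} {y : Fin (m + 1) → ℝ}
    (hy : y ∈ Icc (k.insertNth s a : Fin (m + 1) → ℝ) (k.insertNth t c)) : y k ∈ Icc s t := by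
  simpa using And.intro (hy.1 k) (hy.2 k)

lemma measureReal_Icc_insertNth {a c : Fin m → ℝ} (hac : a ≤ c) {s t : ℝ} (hst : s ≤ t) :
    volume.real (Icc (k.insertNth s a : Fin (m + 1) → ℝ) (k.insertNth t c)) =
      (t - s) * volume.real (Icc a c) := by
  rw [← measureReal_Icc_comp_succAbove_mul (insertNth_le_insertNth hac hst) k,
    Fin.insertNth_comp_succAbove, Fin.insertNth_comp_succAbove, Fin.insertNth_apply_same,
    Fin.insertNth_apply_same, mul_comm]

lemma measureReal_Icc_insertNth_comp_succAbove {a c : Fin m → ℝ} (hac : a ≤ c) {s t : ℝ}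
    (hst : s ≤ t) {j : Fin m} (hj : a j < c j) :
    volume.real (Icc ((k.insertNth s a : Fin (m + 1) → ℝ) ∘ (k.succAbove j).succAbove)
        (k.insertNth t c ∘ (k.succAbove j).succAbove)) =
      (t - s) * volume.real (Icc a c) / (c j - a j) := by
  rw [eq_div_iff (sub_pos.2 hj).ne', ← measureReal_Icc_insertNth hac hst,
    ← measureReal_Icc_comp_succAbove_mul (insertNth_le_insertNth hac hst) (k.succAbove j),
    Fin.insertNth_apply_succAbove, Fin.insertNth_apply_succAbove]

lemma hasFDerivAt_coord_rpow_mul {g : (Fin (m + 1) → ℝ) → ℝ}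
    {g' : (Fin (m + 1) → ℝ) →L[ℝ] ℝ} {y : Fin (m + 1) → ℝ} (hy : 0 < y k)
    (hg : HasFDerivAt g g' y) :
    HasFDerivAt (fun x => x k ^ b * g x)
      (y k ^ b • g' + g y • (b * y k ^ (b - 1)) • ContinuousLinearMap.proj k) y :=
  ((hasFDerivAt_apply k y).rpow_const (Or.inl hy.ne')).mul hg

lemma abs_coord_rpow_mul_le (hb : 0 ≤ b) {y : Fin (m + 1) → ℝ} {t v M : ℝ}
    (hy : y k ∈ Icc 0 t) (hv : |v| ≤ M) : |y k ^ b * v| ≤ M * t ^ b := by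
  rw [abs_mul, abs_of_nonneg (Real.rpow_nonneg hy.1 _), mul_comm]
  exact mul_le_mul hv (Real.rpow_le_rpow hy.1 hy.2 hb) (Real.rpow_nonneg hy.1 _)
    ((abs_nonneg _).trans hv)

/-- The weight `y_k ^ b` turns the Keldysh operator `div W + b W_k / y_k` into a divergence. -/
lemma sum_coord_rpow_mul_apply_single (V : Fin (m + 1) → ℝ)
    (V' : Fin (m + 1) → (Fin (m + 1) → ℝ) →L[ℝ] ℝ) {y : Fin (m + 1) → ℝ} (hy : 0 < y k) :
    ∑ i, (y k ^ b • V' i + V i • (b * y k ^ (b - 1)) • ContinuousLinearMap.proj k :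
        (Fin (m + 1) → ℝ) →L[ℝ] ℝ) (Pi.single i 1) =
      y k ^ b * (∑ i, V' i (Pi.single i 1) + b * V k / y k) := by
  simp only [Real.rpow_sub_one hy.ne', add_apply, smul_apply, smul_eq_mul,
    ContinuousLinearMap.proj_apply, Pi.single_apply, mul_ite, mul_one, mul_zero,
    Finset.sum_add_distrib, ← Finset.mul_sum, Finset.sum_ite_eq, Finset.mem_univ, ↓reduceIte]
  field_simp

variable {W : Fin (m + 1) → (Fin (m + 1) → ℝ) → ℝ}
  {W' : Fin (m + 1) → (Fin (m + 1) → ℝ) → (Fin (m + 1) → ℝ) →L[ℝ] ℝ}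
  {F : (Fin (m + 1) → ℝ) → ℝ}

/-- Flux balance of `y_k ^ b W` over the box `[a, c] × [0, t]`; nothing leaves through the bottom
because the weight vanishes there. -/
theorem abs_flux_add_setIntegral_le (hb : 0 < b)
    (hWc : ∀ i, ContinuousOn (W i) {y | 0 ≤ y k})
    (hW' : ∀ i y, 0 < y k → HasFDerivAt (W i) (W' i y) y)
    (hdiv : ∀ y, 0 < y k → ∑ i, W' i y (Pi.single i 1) + b * W k y / y k = -F y)
    {a c : Fin m → ℝ} (hac : ∀ j, a j < c j) {t : ℝ} (ht : 0 < t)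
    (hF : IntegrableOn (fun y => y k ^ b * F y) (Icc (k.insertNth 0 a) (k.insertNth t c)))
    {M : ℝ} (hM : ∀ i, ∀ y ∈ Icc (k.insertNth 0 a) (k.insertNth t c), |W i y| ≤ M) :
    |t ^ b * (∫ z in Icc a c, W k (k.insertNth t z)) +
        ∫ y in Icc (k.insertNth 0 a) (k.insertNth t c), y k ^ b * F y| ≤
      2 * (M * t ^ b) * ∑ j, t * volume.real (Icc a c) / (c j - a j) := by
  set lo : Fin (m + 1) → ℝ := k.insertNth 0 a
  set hi : Fin (m + 1) → ℝ := k.insertNth t c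
  set Ω := univ.pi fun i => Ioo (lo i) (hi i)
  have hΩ : ∀ y ∈ Ω, 0 < y k := fun y hy => by simpa [lo] using (hy k trivial).1
  set G : Fin (m + 1) → (Fin (m + 1) → ℝ) → ℝ := fun i y => y k ^ b * W i y
  set G' : Fin (m + 1) → (Fin (m + 1) → ℝ) → (Fin (m + 1) → ℝ) →L[ℝ] ℝ := fun i y =>
    y k ^ b • W' i y + W i y • (b * y k ^ (b - 1)) • ContinuousLinearMap.proj k
  have hdivG : EqOn (fun y => ∑ i, G' i y (Pi.single i 1)) (fun y => -(y k ^ b * F y)) Ω :=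
    fun y hy => by
      simp only [G', sum_coord_rpow_mul_apply_single (W · y) (W' · y) (hΩ y hy),
        hdiv y (hΩ y hy), mul_neg]
  have hflux := abs_integral_divergence_sub_flux_le
    (insertNth_le_insertNth (fun j => (hac j).le) ht.le) k G G'
    (fun i => ((continuous_apply k).rpow_const fun _ => Or.inr hb.le).continuousOn.mul
      ((hWc i).mono fun y hy => (apply_mem_Icc_of_mem_Icc_insertNth hy).1))
    (fun y hy i => hasFDerivAt_coord_rpow_mul (hΩ y hy) (hW' i y (hΩ y hy)))
    (IntegrableOn.Icc_congr_of_eqOn hF.neg hdivG) (M := M * t ^ b) fun i _ y hy =>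
      abs_coord_rpow_mul_le hb.le (apply_mem_Icc_of_mem_Icc_insertNth hy) (hM i y hy)
  have hbulk :
      ∫ y in Icc lo hi, ∑ i, G' i y (Pi.single i 1) = -∫ y in Icc lo hi, y k ^ b * F y := by
    rw [setIntegral_Icc_congr_of_eqOn hdivG, integral_neg]
  have htop : ∫ z in Icc (lo ∘ k.succAbove) (hi ∘ k.succAbove), G k (k.insertNth (hi k) z) =
      t ^ b * ∫ z in Icc a c, W k (k.insertNth t z) := by
    simp only [G, lo, hi, Fin.insertNth_comp_succAbove, Fin.insertNth_apply_same,
      integral_const_mul]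
  have hbottom :
      ∫ z in Icc (lo ∘ k.succAbove) (hi ∘ k.succAbove), G k (k.insertNth (lo k) z) = 0 := by
    simp only [G, lo, Fin.insertNth_apply_same, Real.zero_rpow hb.ne', zero_mul, integral_zero]
  rw [hbulk, htop, hbottom, sub_zero, Finset.sum_congr rfl fun j _ =>
    measureReal_Icc_insertNth_comp_succAbove (fun j => (hac j).le) ht.le (hac j), sub_zero]
    at hflux
  rw [← abs_neg]
  convert hflux using 2
  ring

lemma abs_setIntegral_coord_rpow_mul_le {p q : ℝ} (hb : 0 < b) (hpq : p.HolderConjugate q)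
    (hF : Measurable F) {a c : Fin m → ℝ} (hac : a ≤ c) {t : ℝ} (ht : 0 < t)
    (hFt : IntegrableOn (fun y => |F y| ^ p * y k ^ b) (Icc (k.insertNth 0 a) (k.insertNth t c))) :
    |∫ y in Icc (k.insertNth 0 a) (k.insertNth t c), y k ^ b * F y| ≤
      (∫ y in Icc (k.insertNth 0 a) (k.insertNth t c), |F y| ^ p * y k ^ b) ^ (1 / p) *
        volume.real (Icc a c) ^ (1 / q) * t ^ ((b + 1) / q) := by
  refine (abs_setIntegral_weighted_le hpq measurableSet_Icc isCompact_Icc.measure_lt_top.ne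
    (T := t ^ b) (fun y hy => ?_) ((measurable_pi_apply k).pow_const b) hF hFt).trans_eq ?_
  · obtain ⟨hy0, hyt⟩ := apply_mem_Icc_of_mem_Icc_insertNth hy
    exact ⟨Real.rpow_nonneg hy0 b, Real.rpow_le_rpow hy0 hyt hb.le⟩
  rw [measureReal_Icc_insertNth hac ht.le, sub_zero, ← mul_assoc, ← Real.rpow_add_one ht.ne',
    Real.mul_rpow (by positivity) measureReal_nonneg, ← Real.rpow_mul ht.le, mul_one_div]
  ring

theorem exists_abs_setIntegral_insertNth_le {p : ℝ} (hb : 0 < b) (hp : b + 1 < p)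
    (hWc : ∀ i, ContinuousOn (W i) {y | 0 ≤ y k})
    (hW' : ∀ i y, 0 < y k → HasFDerivAt (W i) (W' i y) y)
    (hdiv : ∀ y, 0 < y k → ∑ i, W' i y (Pi.single i 1) + b * W k y / y k = -F y)
    (hF : Measurable F)
    (hFloc : ∀ K, IsCompact K → K ⊆ {y | 0 ≤ y k} →
      IntegrableOn (fun y => |F y| ^ p * y k ^ b) K)
    {a c : Fin m → ℝ} (hac : ∀ j, a j < c j) :
    ∃ C₁ C₂ : ℝ, ∀ t ∈ Ioc (0 : ℝ) 1,
      |∫ z in Icc a c, W k (k.insertNth t z)| ≤ C₁ * t ^ (1 - (b + 1) / p) + C₂ * t := by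
  have hpq : p.HolderConjugate p.conjExponent := .conjExponent (by linarith)
  set q := p.conjExponent
  have hhalf : ∀ {t}, Icc (k.insertNth 0 a : Fin (m + 1) → ℝ) (k.insertNth t c) ⊆ {y | 0 ≤ y k} :=
    fun hy => (apply_mem_Icc_of_mem_Icc_insertNth hy).1
  obtain ⟨M, hM⟩ := isCompact_Icc.exists_bound_of_continuousOn (f := fun y i => W i y)
    (continuousOn_pi.2 fun i => (hWc i).mono (hhalf (t := 1)))
  set A := ∫ y in Icc (k.insertNth 0 a) (k.insertNth 1 c), |F y| ^ p * y k ^ b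
  set V := volume.real (Icc a c)
  refine ⟨A ^ (1 / p) * V ^ (1 / q), 2 * M * ∑ j, V / (c j - a j), fun t ⟨ht0, ht1⟩ => ?_⟩
  set B := Icc (k.insertNth 0 a : Fin (m + 1) → ℝ) (k.insertNth t c)
  have hB1 : B ⊆ Icc (k.insertNth 0 a) (k.insertNth 1 c) :=
    Icc_subset_Icc le_rfl (insertNth_le_insertNth le_rfl ht1)
  have hFB := hFloc B isCompact_Icc hhalf
  have hflux := abs_flux_add_setIntegral_le hb hWc hW' hdiv hac ht0
    (integrable_weighted_mul hpq (ae_restrict_of_forall_mem measurableSet_Icc fun y hy =>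
        Real.rpow_nonneg (hhalf hy) b)
      ((measurable_pi_apply k).pow_const b).aemeasurable hF.aemeasurable hFB
      (((continuous_apply k).rpow_const fun _ => Or.inr hb.le).continuousOn.integrableOn_compact
        isCompact_Icc))
    (M := M) fun i y hy => (norm_le_pi_norm (fun i => W i y) i).trans (hM y (hB1 hy))
  have hbulk : |∫ y in B, y k ^ b * F y| ≤ A ^ (1 / p) * V ^ (1 / q) * t ^ ((b + 1) / q) := by
    refine (abs_setIntegral_coord_rpow_mul_le hb hpq hF (fun j => (hac j).le) ht0 hFB).trans ?_
    gcongr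
    · exact setIntegral_nonneg measurableSet_Icc fun y hy =>
        mul_nonneg (Real.rpow_nonneg (abs_nonneg _) p) (Real.rpow_nonneg (hhalf hy) b)
    · exact one_div_nonneg.mpr hpq.nonneg
    · exact setIntegral_mono_set (hFloc _ isCompact_Icc hhalf)
        (ae_restrict_of_forall_mem measurableSet_Icc fun y hy =>
          mul_nonneg (Real.rpow_nonneg (abs_nonneg _) p) (Real.rpow_nonneg (hhalf hy) b))
        hB1.eventuallyLE
  have hexp : t ^ ((b + 1) / q) = t ^ b * t ^ (1 - (b + 1) / p) := by
    rw [← Real.rpow_add ht0, div_eq_mul_inv, ← hpq.one_sub_inv]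
    ring_nf
  have hside : 2 * (M * t ^ b) * ∑ j, t * V / (c j - a j) =
      t ^ b * ((2 * M * ∑ j, V / (c j - a j)) * t) := by
    simp only [mul_div_assoc, ← Finset.mul_sum]
    ring
  rw [hside] at hflux
  rw [hexp] at hbulk
  set Φ := ∫ z in Icc a c, W k (k.insertNth t z)
  set I := ∫ y in B, y k ^ b * F y
  have htri := abs_sub (t ^ b * Φ + I) I
  rw [add_sub_cancel_right, abs_mul, abs_of_pos (Real.rpow_pos_of_pos ht0 b)] at htri
  refine le_of_mul_le_mul_left ?_ (Real.rpow_pos_of_pos ht0 b)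
  linarith

theorem setIntegral_insertNth_zero_eq_zero {p : ℝ} (hb : 0 < b) (hp : b + 1 < p)
    (hWc : ∀ i, ContinuousOn (W i) {y | 0 ≤ y k})
    (hW' : ∀ i y, 0 < y k → HasFDerivAt (W i) (W' i y) y)
    (hdiv : ∀ y, 0 < y k → ∑ i, W' i y (Pi.single i 1) + b * W k y / y k = -F y)
    (hF : Measurable F)
    (hFloc : ∀ K, IsCompact K → K ⊆ {y | 0 ≤ y k} →
      IntegrableOn (fun y => |F y| ^ p * y k ^ b) K)
    {a c : Fin m → ℝ} (hac : ∀ j, a j < c j) :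
    ∫ z in Icc a c, W k (k.insertNth 0 z) = 0 := by
  obtain ⟨C₁, C₂, hC⟩ := exists_abs_setIntegral_insertNth_le hb hp hWc hW' hdiv hF hFloc hac
  have hδ : 0 < 1 - (b + 1) / p := by
    rw [sub_pos, div_lt_one (by linarith)]; exact hp
  -- `max t 0` extends the slice integrals continuously to all `t`
  have hcont : Continuous fun t : ℝ => ∫ z in Icc a c, W k (k.insertNth (max t 0) z) := by
    refine continuous_parametric_integral_of_continuous ?_ isCompact_Icc
    refine (hWc k).comp_continuous ?_ fun x => by simp
    exact Continuous.finInsertNth k (continuous_fst.max continuous_const) continuous_snd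
  have hlim : Tendsto (fun t : ℝ => |∫ z in Icc a c, W k (k.insertNth (max t 0) z)|) (𝓝[>] 0)
      (𝓝 |∫ z in Icc a c, W k (k.insertNth 0 z)|) := by
    simpa using (hcont.abs.tendsto 0).mono_left nhdsWithin_le_nhds
  have hbound : Tendsto (fun t : ℝ => C₁ * t ^ (1 - (b + 1) / p) + C₂ * t) (𝓝[>] 0) (𝓝 0) := by
    have : Continuous fun t : ℝ => C₁ * t ^ (1 - (b + 1) / p) + C₂ * t := by
      fun_prop (disch := exact hδ.le)
    simpa [Real.zero_rpow hδ.ne'] using (this.tendsto 0).mono_left nhdsWithin_le_nhds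
  refine abs_eq_zero.mp (le_antisymm (le_of_tendsto_of_tendsto hlim hbound ?_) (abs_nonneg _))
  filter_upwards [Ioc_mem_nhdsGT zero_lt_one] with t ht
  rw [max_eq_left ht.1.le]
  exact hC t ht

theorem apply_eq_zero_of_keldysh {p : ℝ} (hb : 0 < b) (hp : b + 1 < p)
    (hWc : ∀ i, ContinuousOn (W i) {y | 0 ≤ y k})
    (hW' : ∀ i y, 0 < y k → HasFDerivAt (W i) (W' i y) y)
    (hdiv : ∀ y, 0 < y k → ∑ i, W' i y (Pi.single i 1) + b * W k y / y k = -F y)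
    (hF : Measurable F)
    (hFloc : ∀ K, IsCompact K → K ⊆ {y | 0 ≤ y k} →
      IntegrableOn (fun y => |F y| ^ p * y k ^ b) K)
    {y₀ : Fin (m + 1) → ℝ} (hy₀ : y₀ k = 0) :
    W k y₀ = 0 := by
  have hcont : Continuous fun z : Fin m → ℝ => W k (k.insertNth 0 z) :=
    (hWc k).comp_continuous (Continuous.finInsertNth k continuous_const continuous_id)
      fun z => by simp
  have h := eq_zero_of_forall_setIntegral_closedBall_eq_zero (μ := volume) hcont
    (x := k.removeNth y₀) fun r hr => by
      rw [closedBall_pi _ hr.le]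
      simp_rw [Real.closedBall_eq_Icc]
      rw [pi_univ_Icc]
      exact setIntegral_insertNth_zero_eq_zero hb hp hWc hW' hdiv hF hFloc fun j => by linarith
  have hy₀' := Fin.insertNth_self_removeNth k y₀
  rw [hy₀] at hy₀'
  rwa [hy₀'] at h

end HalfSpace

section Euclidean

variable {n : ℕ} {u : Eu n → ℝ}

lemma differentiableAt_pd {U : Set (Eu n)} (hU : IsOpen U) (hu : ContDiffOn ℝ 2 u U) {x : Eu n}
    (hx : x ∈ U) (i : Fin n) : DifferentiableAt ℝ (pd u i) x :=
  (((hu.fderiv_of_isOpen hU (by norm_num)).differentiableOn one_ne_zero x hx).differentiableAt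
    (hU.mem_nhds hx)).clm_apply (differentiableAt_const _)

lemma hasFDerivAt_pd_toLp {U : Set (Eu n)} (hU : IsOpen U) (hu : ContDiffOn ℝ 2 u U)
    {y : Fin n → ℝ} (hy : WithLp.toLp 2 y ∈ U) (i : Fin n) :
    HasFDerivAt (fun y : Fin n → ℝ => pd u i (WithLp.toLp 2 y))
      ((fderiv ℝ (pd u i) (WithLp.toLp 2 y)).comp
        (PiLp.continuousLinearEquiv 2 ℝ fun _ : Fin n => ℝ).symm.toContinuousLinearMap) y :=
  (differentiableAt_pd hU hu hy i).hasFDerivAt.comp y (PiLp.hasFDerivAt_toLp 2 y)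

lemma integrableOn_comp_toLp {g : Eu n → ℝ} {s : Set (Eu n)}
    (hg : ∀ K, IsCompact K → K ⊆ s → IntegrableOn g K) {K : Set (Fin n → ℝ)} (hK : IsCompact K)
    (hKs : K ⊆ WithLp.toLp 2 ⁻¹' s) : IntegrableOn (g ∘ WithLp.toLp 2) K := by
  have h := hg _ (hK.image (PiLp.continuous_toLp 2 _)) (image_subset_iff.2 hKs)
  rwa [(PiLp.volume_preserving_toLp _).integrableOn_image
    (MeasurableEquiv.toLp 2 _).measurableEmbedding] at h

variable {k : Fin n}

lemma isOpen_setOf_coord_pos : IsOpen {x : Eu n | 0 < x k} :=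
  isOpen_lt continuous_const ((continuous_apply k).comp (PiLp.continuous_ofLp 2 _))

lemma toLp_apply_single_eventuallyEq {Du : Eu n → Eu n →L[ℝ] ℝ}
    (hDu : ∀ x : Eu n, 0 ≤ x k → HasFDerivWithinAt u (Du x) {y : Eu n | 0 ≤ y k} x)
    {y : Fin n → ℝ} (hy : 0 < y k) (i : Fin n) :
    (fun y : Fin n → ℝ => Du (WithLp.toLp 2 y) (EuclideanSpace.single i 1)) =ᶠ[𝓝 y]
      fun y => pd u i (WithLp.toLp 2 y) := by
  have hU : {x : Eu n | 0 < x k} ∈ 𝓝 (WithLp.toLp 2 y) := isOpen_setOf_coord_pos.mem_nhds hy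
  filter_upwards [(PiLp.continuous_toLp 2 _).continuousAt.preimage_mem_nhds hU] with z hz
  rw [pd, ((hDu _ (le_of_lt hz)).hasFDerivAt (mem_of_superset (isOpen_setOf_coord_pos.mem_nhds hz)
    (ofPred_subset_ofPred.2 fun _ => le_of_lt))).fderiv]

end Euclidean

theorem stmt18_general (n : ℕ) (ln : Fin n)
    (b p : ℝ) (hb : 1 < b) (hp : (n : ℝ) + b < p)
    (u f : Eu n → ℝ) (Du : Eu n → (Eu n →L[ℝ] ℝ))
    -- u is C² in ℝⁿ₊
    (hC2 : ContDiffOn ℝ 2 u {x : Eu n | 0 < x ln})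
    -- u is C¹ on the closed half-space, with derivative Du
    (hC1 : ∀ x : Eu n, 0 ≤ x ln →
      HasFDerivWithinAt u (Du x) {y : Eu n | 0 ≤ y ln} x)
    (hDucont : ContinuousOn Du {y : Eu n | 0 ≤ y ln})
    -- f is measurable with ∫_K |f|^p xₙ^b dx < ∞ on every compact K ⊆ closed half-space
    (hfmeas : Measurable f)
    (hfloc : ∀ K : Set (Eu n), IsCompact K → K ⊆ {y : Eu n | 0 ≤ y ln} →
      MeasureTheory.IntegrableOn (fun x => |f x| ^ p * (x ln) ^ b) K)
    -- −Δu − b uₙ/xₙ = f in ℝⁿ₊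
    (heq : ∀ x : Eu n, 0 < x ln →
      -(∑ i, pd2 u i i x) - b * pd u ln x / x ln = f x) :
    -- then the Neumann boundary condition holds
    ∀ x : Eu n, x ln = 0 → Du x (EuclideanSpace.single ln 1) = 0 := by
  intro x₀ hx₀
  obtain ⟨m, rfl⟩ := Nat.exists_eq_add_one_of_ne_zero ln.pos.ne'
  have hpb : b + 1 < p := by
    have : (1 : ℝ) ≤ (m + 1 : ℕ) := by exact_mod_cast Nat.le_add_left 1 m
    linarith
  refine apply_eq_zero_of_keldysh (k := ln)
    (W := fun i y => Du (WithLp.toLp 2 y) (EuclideanSpace.single i 1))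
    (W' := fun i y => (fderiv ℝ (pd u i) (WithLp.toLp 2 y)).comp
      (PiLp.continuousLinearEquiv 2 ℝ fun _ : Fin (m + 1) => ℝ).symm.toContinuousLinearMap)
    (F := fun y => f (WithLp.toLp 2 y)) (by linarith) hpb
    (fun i => (hDucont.comp (PiLp.continuous_toLp 2 _).continuousOn fun _ hy => hy).clm_apply
      continuousOn_const)
    (fun i y hy => (hasFDerivAt_pd_toLp isOpen_setOf_coord_pos hC2 hy i).congr_of_eventuallyEq
      (toLp_apply_single_eventuallyEq hC1 hy i))
    (fun y hy => ?_) (hfmeas.comp (PiLp.continuous_toLp 2 _).measurable)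
    (fun K hK hKs => integrableOn_comp_toLp hfloc hK hKs) (y₀ := WithLp.ofLp x₀) hx₀
  have hWln : Du (WithLp.toLp 2 y) (EuclideanSpace.single ln 1) = pd u ln (WithLp.toLp 2 y) :=
    (toLp_apply_single_eventuallyEq hC1 hy ln).self_of_nhds
  rw [hWln, ← heq _ hy]
  change ∑ i, pd2 u i i (WithLp.toLp 2 y) + _ = _
  ring

theorem stmt18 (n : ℕ) (hn : 2 ≤ n) (ln : Fin n) (hln : (ln : ℕ) = n - 1)
    (b p : ℝ) (hb : 1 < b) (hp : (n : ℝ) + b < p)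
    (u f : Eu n → ℝ) (Du : Eu n → (Eu n →L[ℝ] ℝ))
    -- u is bounded on ℝⁿ₊
    (hbdd : ∃ M : ℝ, ∀ x : Eu n, 0 < x ln → |u x| ≤ M)
    -- u is C² in ℝⁿ₊
    (hC2 : ContDiffOn ℝ 2 u {x : Eu n | 0 < x ln})
    -- u is C¹ on the closed half-space, with derivative Du
    (hC1 : ∀ x : Eu n, 0 ≤ x ln →
      HasFDerivWithinAt u (Du x) {y : Eu n | 0 ≤ y ln} x)
    (hDucont : ContinuousOn Du {y : Eu n | 0 ≤ y ln})
    -- f is measurable with ∫_K |f|^p xₙ^b dx < ∞ on every compact K ⊆ closed half-space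
    (hfmeas : Measurable f)
    (hfloc : ∀ K : Set (Eu n), IsCompact K → K ⊆ {y : Eu n | 0 ≤ y ln} →
      MeasureTheory.IntegrableOn (fun x => |f x| ^ p * (x ln) ^ b) K)
    -- −Δu − b uₙ/xₙ = f in ℝⁿ₊
    (heq : ∀ x : Eu n, 0 < x ln →
      -(∑ i, pd2 u i i x) - b * pd u ln x / x ln = f x) :
    -- then the Neumann boundary condition holds
    ∀ x : Eu n, x ln = 0 → Du x (EuclideanSpace.single ln 1) = 0 :=
  stmt18_general n ln b p hb hp u f Du hC2 hC1 hDucont hfmeas hfloc heq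
end
end
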